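/- arXiv:1706.09784 — 9 statements merged into one kernel-verified Lean document; each statement's English description precedes it below -/
import Mathlib

section
/- If p : D → C is holomorphic on the unit disc with p(0) = 1 and Re p(z) > 0 for all z ∈ D, and p(z) = 1 + Σ_{n≥1} c_n zⁿ is its power series expansion, then |c_n| ≤ 2 for all n ≥ 1. -/
/-!
Write `aₖ = cₖ rᵏ` for `0 < r < 1`. On the circle `|z| = r` the power series becomes the
absolutely convergent trigonometric series `f(θ) = ∑ aₖ e^{ikθ}` with no negative frequencies,
so `f` has Fourier coefficients `aₙ` at `n ≥ 0` and `0` at `-n < 0`. For `n ≥ 1`, adding the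
coefficient of `f` at `n` and the conjugate of the one at `-n` gives
`2π aₙ = ∫ 2 Re f(θ) e^{-inθ} dθ`, and since `Re f ≥ 0` its modulus is at most
`∫ 2 Re f = 4π Re a₀`. Hence `|cₙ| rⁿ ≤ 2`, and `r → 1` gives `|cₙ| ≤ 2`.
-/

open Complex ComplexConjugate MeasureTheory Real Filter Topology FormalMultilinearSeries
open scoped NNReal ENNReal

theorem summable_norm_mul_pow_of_summable {𝕜 : Type*} [NontriviallyNormedField 𝕜] {c : ℕ → 𝕜}
    {z : 𝕜} (hs : Summable fun k => c k * z ^ k) {r : ℝ} (hr0 : 0 ≤ r) (hr : r < ‖z‖) :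
    Summable fun k => ‖c k‖ * r ^ k := by
  lift r to ℝ≥0 using hr0
  have hz : (‖z‖₊ : ℝ≥0∞) ≤ (ofScalars 𝕜 c).radius :=
    (ofScalars 𝕜 c).le_radius_of_tendsto (l := 0) <| by
      simpa [ofScalars_norm] using hs.tendsto_atTop_zero.norm
  have hr' : (r : ℝ≥0∞) < ‖z‖₊ := by exact_mod_cast hr
  simpa [ofScalars_norm] using (ofScalars 𝕜 c).summable_norm_mul_pow (hr'.trans_le hz)

theorem le_of_forall_mul_pow_le {x y : ℝ} (n : ℕ) (h : ∀ r ∈ Set.Ioo (0 : ℝ) 1, x * r ^ n ≤ y) :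
    x ≤ y := by
  have hlim : Tendsto (fun r : ℝ => x * r ^ n) (𝓝[<] 1) (𝓝 x) :=
    ((continuous_const.mul (continuous_pow n)).tendsto' 1 x (by simp)).mono_left
      nhdsWithin_le_nhds
  exact le_of_tendsto hlim (eventually_of_mem (Ioo_mem_nhdsLT zero_lt_one) h)

theorem integral_exp_int_mul_I_eq_zero {m : ℤ} (hm : m ≠ 0) :
    ∫ θ in (0 : ℝ)..2 * π, exp (m * θ * I) = 0 := by
  have hmI : (m : ℂ) * I ≠ 0 := by simpa using hm
  simp_rw [mul_right_comm _ _ I]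
  have hperiod : (m : ℂ) * I * (2 * π : ℝ) = m * (2 * π * I) := by push_cast; ring
  rw [integral_exp_mul_complex hmI, hperiod, exp_int_mul_two_pi_mul_I]
  simp

theorem norm_mul_exp_int_mul_I (z : ℂ) (m : ℤ) (θ : ℝ) : ‖z * exp (m * θ * I)‖ = ‖z‖ := by
  simp [norm_exp]

noncomputable def trigSeries (a : ℕ → ℂ) (θ : ℝ) : ℂ := ∑' k, a k * exp (k * θ * I)

section
variable {a : ℕ → ℂ}

theorem continuous_trigSeries (ha : Summable fun k => ‖a k‖) : Continuous (trigSeries a) :=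
  continuous_tsum (fun k => by fun_prop) ha fun k θ => by
    exact_mod_cast (norm_mul_exp_int_mul_I (a k) k θ).le

theorem hasSum_integral_trigSeries_mul_exp (ha : Summable fun k => ‖a k‖) (j : ℤ) :
    HasSum (fun k => a k * ∫ θ in (0 : ℝ)..2 * π, exp (((k + j : ℤ) : ℂ) * θ * I))
      (∫ θ in (0 : ℝ)..2 * π, trigSeries a θ * exp (j * θ * I)) := by
  have hterm : ∀ k : ℕ, ∀ θ : ℝ,
      a k * exp (((k + j : ℤ) : ℂ) * θ * I) = a k * exp (k * θ * I) * exp (j * θ * I) := by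
    intro k θ
    rw [mul_assoc (a k), ← Complex.exp_add]
    push_cast
    ring
  simp_rw [← intervalIntegral.integral_const_mul]
  refine intervalIntegral.hasSum_integral_of_dominated_convergence (fun k _ => ‖a k‖)
    (fun k => by fun_prop) (fun k => ae_of_all _ fun θ _ => (norm_mul_exp_int_mul_I _ _ _).le)
    (ae_of_all _ fun _ _ => ha) intervalIntegrable_const (ae_of_all _ fun θ _ => ?_)
  simp_rw [hterm]
  refine (Summable.hasSum ?_).mul_right _
  exact ha.of_norm_bounded fun k => by exact_mod_cast (norm_mul_exp_int_mul_I (a k) k θ).le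

theorem integral_trigSeries_mul_exp_neg (ha : Summable fun k => ‖a k‖) (n : ℕ) :
    ∫ θ in (0 : ℝ)..2 * π, trigSeries a θ * exp (-n * θ * I) = 2 * π * a n := by
  have h := hasSum_integral_trigSeries_mul_exp ha (-n)
  rw [Int.cast_neg, Int.cast_natCast] at h
  refine h.unique ?_
  convert hasSum_ite_eq n (2 * π * a n : ℂ) using 1
  ext k
  split_ifs with hk
  · subst hk; simp [mul_comm]
  · rw [integral_exp_int_mul_I_eq_zero (by omega), mul_zero]

theorem integral_trigSeries_mul_exp_eq_zero (ha : Summable fun k => ‖a k‖) {n : ℕ} (hn : n ≠ 0) :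
    ∫ θ in (0 : ℝ)..2 * π, trigSeries a θ * exp (n * θ * I) = 0 := by
  have h := hasSum_integral_trigSeries_mul_exp ha n
  rw [Int.cast_natCast] at h
  refine h.unique ?_
  convert hasSum_zero with k
  rw [integral_exp_int_mul_I_eq_zero (by omega), mul_zero]

theorem integral_trigSeries (ha : Summable fun k => ‖a k‖) :
    ∫ θ in (0 : ℝ)..2 * π, trigSeries a θ = 2 * π * a 0 := by
  simpa using integral_trigSeries_mul_exp_neg ha 0

theorem two_pi_mul_coeff_eq_integral_re_mul_exp (ha : Summable fun k => ‖a k‖) {n : ℕ}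
    (hn : n ≠ 0) :
    2 * π * a n = ∫ θ in (0 : ℝ)..2 * π, (2 * (trigSeries a θ).re : ℝ) * exp (-n * θ * I) := by
  have hcont := continuous_trigSeries ha
  calc (2 * π * a n : ℂ)
      = (∫ θ in (0 : ℝ)..2 * π, trigSeries a θ * exp (-n * θ * I))
        + conj (∫ θ in (0 : ℝ)..2 * π, trigSeries a θ * exp (n * θ * I)) := by
        rw [integral_trigSeries_mul_exp_eq_zero ha hn, map_zero, add_zero,
          integral_trigSeries_mul_exp_neg ha]
    _ = ∫ θ in (0 : ℝ)..2 * π,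
          (trigSeries a θ * exp (-n * θ * I) + conj (trigSeries a θ * exp (n * θ * I))) := by
        rw [intervalIntegral.integral_add ((by fun_prop : Continuous _).intervalIntegrable _ _)
          ((by fun_prop : Continuous _).intervalIntegrable _ _)]
        exact congrArg _ (conjLIE.toLinearIsometry.intervalIntegral_comp_comm _).symm
    _ = _ := by
        refine intervalIntegral.integral_congr fun θ _ => ?_
        have hconj : conj ((n : ℂ) * θ * I) = -n * θ * I := by simp
        rw [map_mul, ← exp_conj, hconj, ← add_mul, add_conj]

theorem norm_coeff_le_two_mul_re_coeff_zero (ha : Summable fun k => ‖a k‖)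
    (hre : ∀ θ, 0 ≤ (trigSeries a θ).re) {n : ℕ} (hn : n ≠ 0) :
    ‖a n‖ ≤ 2 * (a 0).re := by
  have hcont := continuous_trigSeries ha
  have hπ : 0 < 2 * π := by positivity
  refine le_of_mul_le_mul_left ?_ hπ
  calc 2 * π * ‖a n‖
      = ‖∫ θ in (0 : ℝ)..2 * π, (2 * (trigSeries a θ).re : ℝ) * exp (-n * θ * I)‖ := by
        rw [← two_pi_mul_coeff_eq_integral_re_mul_exp ha hn, norm_mul]
        simp [abs_of_pos pi_pos]
    _ ≤ ∫ θ in (0 : ℝ)..2 * π, ‖(2 * (trigSeries a θ).re : ℝ) * exp (-n * θ * I)‖ :=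
        intervalIntegral.norm_integral_le_integral_norm hπ.le
    _ = ∫ θ in (0 : ℝ)..2 * π, 2 * (trigSeries a θ).re := by
        refine intervalIntegral.integral_congr fun θ _ => ?_
        simp [norm_exp, abs_of_nonneg (hre θ)]
    _ = 2 * (∫ θ in (0 : ℝ)..2 * π, trigSeries a θ).re := by
        rw [intervalIntegral.integral_const_mul]
        exact congrArg _ (intervalIntegral.intervalIntegral_re (hcont.intervalIntegrable _ _))
    _ = 2 * π * (2 * (a 0).re) := by
        rw [integral_trigSeries ha]
        simp only [mul_re, mul_im, re_ofNat, ofReal_re, im_ofNat, ofReal_im, mul_zero, zero_mul,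
          sub_zero, add_zero]
        ring
end

theorem trigSeries_eq_of_hasSum {c : ℕ → ℂ} {s : ℂ} {r θ : ℝ}
    (h : HasSum (fun k => c k * circleMap 0 r θ ^ k) s) :
    trigSeries (fun k => c k * r ^ k) θ = s := by
  refine Eq.trans (tsum_congr fun k => ?_) h.tsum_eq
  rw [circleMap_zero_pow, circleMap_zero]
  push_cast
  ring

theorem caratheodory_coeff_bound_general (p : ℂ → ℂ) (c : ℕ → ℂ)
    (hre : ∀ z ∈ Metric.ball (0 : ℂ) 1, 0 < (p z).re)
    (hc0 : c 0 = 1)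
    (hsum : ∀ z ∈ Metric.ball (0 : ℂ) 1, HasSum (fun n : ℕ => c n * z ^ n) (p z)) :
    ∀ n : ℕ, 1 ≤ n → ‖c n‖ ≤ 2 := by
  intro n hn
  refine le_of_forall_mul_pow_le n fun r ⟨hr0, hr1⟩ => ?_
  have hmem : ∀ θ, circleMap 0 r θ ∈ Metric.ball (0 : ℂ) 1 := fun θ => by
    simpa [abs_of_pos hr0] using hr1
  obtain ⟨ρ, hrρ, hρ1⟩ := exists_between hr1
  have hρ : (ρ : ℂ) ∈ Metric.ball (0 : ℂ) 1 := by
    simpa [abs_of_pos (hr0.trans hrρ)] using hρ1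
  have ha : Summable fun k => ‖c k * r ^ k‖ := by
    simpa [abs_of_pos hr0] using summable_norm_mul_pow_of_summable (hsum _ hρ).summable hr0.le
      (by simpa [abs_of_pos (hr0.trans hrρ)] using hrρ)
  have hp : ∀ θ, trigSeries (fun k => c k * r ^ k) θ = p (circleMap 0 r θ) := fun θ =>
    trigSeries_eq_of_hasSum (hsum _ (hmem θ))
  simpa [hc0, abs_of_pos hr0] using norm_coeff_le_two_mul_re_coeff_zero ha
    (fun θ => hp θ ▸ (hre _ (hmem θ)).le) (by omega : n ≠ 0)

/-- Carathéodory's lemma: if `p` is holomorphic on the unit disc with `p(0) = 1`,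
`Re p > 0` on the disc, and `p(z) = Σ_{n≥0} c_n zⁿ` with `c_0 = 1`, then `|c_n| ≤ 2`
for all `n ≥ 1`. -/
theorem caratheodory_coeff_bound (p : ℂ → ℂ) (c : ℕ → ℂ)
    (hdiff : DifferentiableOn ℂ p (Metric.ball (0 : ℂ) 1))
    (hp0 : p 0 = 1)
    (hre : ∀ z ∈ Metric.ball (0 : ℂ) 1, 0 < (p z).re)
    (hc0 : c 0 = 1)
    (hsum : ∀ z ∈ Metric.ball (0 : ℂ) 1, HasSum (fun n : ℕ => c n * z ^ n) (p z)) :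
    ∀ n : ℕ, 1 ≤ n → ‖c n‖ ≤ 2 :=
  caratheodory_coeff_bound_general p c hre hc0 hsum
end

section
/- Let (h₁,h₂) ∈ M(D²) with power series h₁(z) = -z₁ + Σ_{|α|≥2} c_α z^α. Then |c_{(0,2)}| ≤ 1, i.e. the coefficient of z₂² in h₁ has modulus at most 1. -/
open Complex

def polydisc2 : Set (ℂ × ℂ) := {z | ‖z.1‖ < 1 ∧ ‖z.2‖ < 1}

/-- The class `M(D²)` of infinitesimal generators on the unit polydisc in `ℂ²`. -/
def memM2 (h : ℂ × ℂ → ℂ × ℂ) : Prop :=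
  DifferentiableOn ℂ h polydisc2 ∧ h 0 = 0 ∧
    fderiv ℂ h 0 = -ContinuousLinearMap.id ℂ (ℂ × ℂ) ∧
    (∀ z ∈ polydisc2, z.1 ≠ 0 → ‖z.2‖ ≤ ‖z.1‖ → ((h z).1 / z.1).re ≤ 0) ∧
    (∀ z ∈ polydisc2, z.2 ≠ 0 → ‖z.1‖ ≤ ‖z.2‖ → ((h z).2 / z.2).re ≤ 0)

/-!
Restrict `h₁(z)/z₁` to the curve `φ ↦ (s e^{2iφ}, s e^{i(φ+t)})`, `0 < s < 1`. There the monomial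
`c_α z^α / z₁` is a constant multiple of `e^{i(2α₁+α₂-2)φ}`, so averaging over `[0, 2π]` keeps only
`α = (1,0)` and `α = (0,2)` and gives `-1 + s c_{(0,2)} e^{2it}`. Since `|z₁| = |z₂|` on the curve,
this average has nonpositive real part. Choosing `t` so that `c_{(0,2)} e^{2it} = |c_{(0,2)}|` and
letting `s → 1` gives the bound.
-/

open Filter Topology MeasureTheory
open scoped Real

theorem intervalIntegral_exp_int_mul_I (n : ℤ) :
    ∫ φ in (0 : ℝ)..2 * π, exp (n * φ * I) = if n = 0 then (2 * π : ℂ) else 0 := by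
  split_ifs with hn
  · simp [hn]
  have hnI : (n : ℂ) * I ≠ 0 := mul_ne_zero (Int.cast_ne_zero.mpr hn) I_ne_zero
  simp_rw [mul_right_comm _ _ I]
  rw [integral_exp_mul_complex hnI]
  push_cast
  rw [show (n : ℂ) * I * (2 * π) = n * (2 * π * I) by ring, exp_int_mul_two_pi_mul_I]
  simp

theorem hasSum_intervalIntegral_of_hasSum_exp {ι : Type*} [Countable ι] {a : ι → ℂ} {k : ι → ℤ}
    {f : ℝ → ℂ} (ha : Summable (‖a ·‖))
    (hf : ∀ φ : ℝ, HasSum (fun i ↦ a i * exp (k i * φ * I)) (f φ)) :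
    HasSum (fun i ↦ if k i = 0 then 2 * π * a i else 0) (∫ φ in (0 : ℝ)..2 * π, f φ) := by
  have hterm : ∀ i, ∫ φ in (0 : ℝ)..2 * π, a i * exp (k i * φ * I) =
      if k i = 0 then 2 * π * a i else 0 := by
    intro i
    rw [intervalIntegral.integral_const_mul, intervalIntegral_exp_int_mul_I]
    split_ifs <;> ring
  refine funext hterm ▸ intervalIntegral.hasSum_integral_of_dominated_convergence (fun i _ ↦ ‖a i‖)
    (fun i ↦ by fun_prop) (fun i ↦ ae_of_all _ fun φ _ ↦ ?_) (ae_of_all _ fun _ _ ↦ ha)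
    intervalIntegrable_const (ae_of_all _ fun φ _ ↦ hf φ)
  rw [norm_mul, ← ofReal_intCast, ← ofReal_mul, norm_exp_ofReal_mul_I, mul_one]

noncomputable def torusCurve (s t φ : ℝ) : ℂ × ℂ := (s * exp (2 * φ * I), s * exp ((φ + t) * I))

theorem norm_torusCurve_fst (s t φ : ℝ) : ‖(torusCurve s t φ).1‖ = |s| := by
  simp [torusCurve, ← ofReal_ofNat, ← ofReal_mul, norm_exp_ofReal_mul_I]

theorem norm_torusCurve_snd (s t φ : ℝ) : ‖(torusCurve s t φ).2‖ = |s| := by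
  simp [torusCurve, ← ofReal_add, norm_exp_ofReal_mul_I]

theorem torusCurve_mem_polydisc2 {s : ℝ} (hs : |s| < 1) (t φ : ℝ) :
    torusCurve s t φ ∈ polydisc2 :=
  ⟨(norm_torusCurve_fst s t φ).trans_lt hs, (norm_torusCurve_snd s t φ).trans_lt hs⟩

theorem torusCurve_fst_ne_zero {s : ℝ} (hs : s ≠ 0) (t φ : ℝ) : (torusCurve s t φ).1 ≠ 0 :=
  mul_ne_zero (ofReal_ne_zero.mpr hs) (exp_ne_zero _)

theorem monomial_div_fst_torusCurve (c : ℂ) {s : ℝ} (hs : s ≠ 0) (t φ : ℝ) (m n : ℕ) :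
    c * (torusCurve s t φ).1 ^ m * (torusCurve s t φ).2 ^ n / (torusCurve s t φ).1 =
      c * s ^ (m + n) / s * exp (n * t * I) * exp (((2 * m + n : ℕ) - 2 : ℤ) * φ * I) := by
  have hexp : exp (((2 * m + n : ℕ) - 2 : ℤ) * φ * I) * exp (2 * φ * I) =
      exp (2 * φ * I) ^ m * exp (φ * I) ^ n := by
    rw [← Complex.exp_nat_mul, ← Complex.exp_nat_mul, ← Complex.exp_add, ← Complex.exp_add]
    push_cast
    ring_nf
  have hinv : (s : ℂ)⁻¹ * s = 1 := inv_mul_cancel₀ (ofReal_ne_zero.mpr hs)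
  rw [div_eq_iff (torusCurve_fst_ne_zero hs t φ), torusCurve, add_mul, Complex.exp_add,
    mul_assoc (n : ℂ), Complex.exp_nat_mul]
  linear_combination -(c * (s : ℂ) ^ (m + n) * exp (t * I) ^ n) * hexp -
    c * (s : ℂ) ^ (m + n) * exp (t * I) ^ n * exp (((2 * m + n : ℕ) - 2 : ℤ) * φ * I) *
      exp (2 * φ * I) * hinv

theorem intervalIntegral_fst_div_fst_torusCurve (h : ℂ × ℂ → ℂ × ℂ) (c : ℕ × ℕ → ℂ)
    (hc : ∀ z ∈ polydisc2, HasSum (fun α : ℕ × ℕ => c α * z.1 ^ α.1 * z.2 ^ α.2) ((h z).1))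
    (h10 : c (1, 0) = -1) {s : ℝ} (hs0 : 0 < s) (hs1 : s < 1) (t : ℝ) :
    ∫ φ in (0 : ℝ)..2 * π, (h (torusCurve s t φ)).1 / (torusCurve s t φ).1 =
      (2 * π : ℝ) * (s * (c (0, 2) * exp (2 * t * I)) - 1) := by
  have hs_abs : |s| < 1 := (abs_of_pos hs0).symm ▸ hs1
  set a : ℕ × ℕ → ℂ := fun α ↦ c α * s ^ (α.1 + α.2) / s * exp (α.2 * t * I)
  set k : ℕ × ℕ → ℤ := fun α ↦ (2 * α.1 + α.2 : ℕ) - 2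
  have ha : Summable (‖a ·‖) := by
    have hmem : ((s : ℂ), (s : ℂ)) ∈ polydisc2 := by simpa [polydisc2] using hs_abs
    refine ((summable_norm_iff.mpr (hc _ hmem).summable).div_const s).congr fun α ↦ ?_
    simp [a, pow_add, norm_exp, abs_of_pos hs0, mul_assoc]
  have hf : ∀ φ : ℝ, HasSum (fun α ↦ a α * exp (k α * φ * I))
      ((h (torusCurve s t φ)).1 / (torusCurve s t φ).1) := fun φ ↦ by
    have hterm : (fun α ↦ a α * exp (k α * φ * I)) = fun α ↦
        c α * (torusCurve s t φ).1 ^ α.1 * (torusCurve s t φ).2 ^ α.2 / (torusCurve s t φ).1 :=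
      funext fun α ↦ (monomial_div_fst_torusCurve (c α) hs0.ne' t φ α.1 α.2).symm
    exact hterm ▸ (hc _ (torusCurve_mem_polydisc2 hs_abs t φ)).div_const _
  have hk : ∀ α ∉ ({(1, 0), (0, 2)} : Finset (ℕ × ℕ)), k α ≠ 0 := by
    rintro ⟨m, n⟩ hα
    simp only [Finset.mem_insert, Finset.mem_singleton, Prod.ext_iff, not_or] at hα
    simp only [k]
    omega
  have hsum : HasSum (fun α ↦ if k α = 0 then 2 * π * a α else 0)
      (∑ α ∈ {(1, 0), (0, 2)}, if k α = 0 then 2 * π * a α else 0) :=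
    hasSum_sum_of_ne_finset_zero fun α hα ↦ if_neg (hk α hα)
  rw [(hasSum_intervalIntegral_of_hasSum_exp ha hf).unique hsum]
  have hs : (s : ℂ) ≠ 0 := ofReal_ne_zero.mpr hs0.ne'
  simp [a, k, h10]
  field_simp
  ring

theorem re_mul_exp_le_one (h : ℂ × ℂ → ℂ × ℂ) (hM : memM2 h) (c : ℕ × ℕ → ℂ)
    (hc : ∀ z ∈ polydisc2, HasSum (fun α : ℕ × ℕ => c α * z.1 ^ α.1 * z.2 ^ α.2) ((h z).1))
    (h10 : c (1, 0) = -1) {s : ℝ} (hs0 : 0 < s) (hs1 : s < 1) (t : ℝ) :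
    s * (c (0, 2) * exp (2 * t * I)).re ≤ 1 := by
  have hs_abs : |s| < 1 := (abs_of_pos hs0).symm ▸ hs1
  have hmem := torusCurve_mem_polydisc2 hs_abs t
  have hne := torusCurve_fst_ne_zero hs0.ne' t
  have hcont : Continuous fun φ ↦ (h (torusCurve s t φ)).1 / (torusCurve s t φ).1 :=
    ((continuous_fst.comp_continuousOn hM.1.continuousOn).comp_continuous
      (by unfold torusCurve; fun_prop) hmem).div (by unfold torusCurve; fun_prop) hne
  have hre : (∫ φ in (0 : ℝ)..2 * π, (h (torusCurve s t φ)).1 / (torusCurve s t φ).1).re ≤ 0 := by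
    rw [← RCLike.re_eq_complex_re, ← intervalIntegral.intervalIntegral_re
      (hcont.intervalIntegrable _ _), intervalIntegral.integral_of_le (by positivity)]
    refine integral_nonpos fun φ ↦ hM.2.2.2.1 _ (hmem φ) (hne φ) ?_
    rw [norm_torusCurve_fst, norm_torusCurve_snd]
  rw [intervalIntegral_fst_div_fst_torusCurve h c hc h10 hs0 hs1, re_ofReal_mul, sub_re, one_re,
    re_ofReal_mul] at hre
  linarith [nonpos_of_mul_nonpos_right hre (by positivity)]

theorem coeff_zero_two_le_one_general (h : ℂ × ℂ → ℂ × ℂ) (hM : memM2 h) (c : ℕ × ℕ → ℂ)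
    (hc : ∀ z ∈ polydisc2, HasSum (fun α : ℕ × ℕ => c α * z.1 ^ α.1 * z.2 ^ α.2) ((h z).1))
    (h10 : c (1, 0) = -1) :
    ‖c (0, 2)‖ ≤ 1 := by
  have hrot : c (0, 2) * exp (2 * (-arg (c (0, 2)) / 2 : ℝ) * I) = ‖c (0, 2)‖ := by
    nth_rw 1 [← norm_mul_exp_arg_mul_I (c (0, 2))]
    rw [mul_assoc, ← Complex.exp_add, show (arg (c (0, 2)) : ℂ) * I +
      2 * ((-arg (c (0, 2)) / 2 : ℝ) : ℂ) * I = 0 by push_cast; ring, Complex.exp_zero, mul_one]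
  have hle : ∀ s ∈ Set.Ioo (0 : ℝ) 1, s * ‖c (0, 2)‖ ≤ 1 := fun s hs ↦ by
    simpa only [hrot, ofReal_re] using
      re_mul_exp_le_one h hM c hc h10 hs.1 hs.2 (-arg (c (0, 2)) / 2)
  have hlim : Tendsto (fun s : ℝ ↦ s * ‖c (0, 2)‖) (𝓝[<] 1) (𝓝 ‖c (0, 2)‖) := by
    simpa using ((continuous_mul_const ‖c (0, 2)‖).tendsto 1).mono_left nhdsWithin_le_nhds
  exact le_of_tendsto hlim (eventually_of_mem (Ioo_mem_nhdsLT one_pos) hle)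

/-- For `h = (h₁,h₂) ∈ M(D²)` with `h₁(z) = -z₁ + Σ_{|α|≥2} c_α z^α`, the coefficient of
`z₂²` satisfies `|c_{(0,2)}| ≤ 1`. -/
theorem coeff_zero_two_le_one (h : ℂ × ℂ → ℂ × ℂ) (hM : memM2 h) (c : ℕ × ℕ → ℂ)
    (hc : ∀ z ∈ polydisc2, HasSum (fun α : ℕ × ℕ => c α * z.1 ^ α.1 * z.2 ^ α.2) ((h z).1))
    (h00 : c (0, 0) = 0) (h10 : c (1, 0) = -1) (h01 : c (0, 1) = 0) :
    ‖c (0, 2)‖ ≤ 1 :=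
  coeff_zero_two_le_one_general h hM c hc h10
end

section
/- Let (h₁,h₂,h₃) ∈ M(D³) with power series h₁(z) = -z₁ + Σ_{|α|≥2} c_α z^α. Then |c_{(0,1,1)}| ≤ 1, i.e. the coefficient of z₂z₃ in h₁ has modulus at most 1. -/
/-!
Fix `0 < r < 1`, a unimodular `u` with `c₀₁₁ u = |c₀₁₁|`, and put `ρ = r u`. At the points
`z = (ρ ζ^(a+b), ρ ζ^b, ρ ζ^a)`, `ζ` a primitive `N`-th root of unity, all coordinates have modulus
`r`, so `Re (h₁ z / z₁) ≤ 0`. Since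
`h₁ z / z₁ = Σ c_α ρ^(|α|-1) (ζ^(α₁+α₃-1))^a (ζ^(α₁+α₂-1))^b`, averaging over `a, b < N` keeps,
for `N > |α| + 1`, exactly the monomials with `α₁ + α₃ = α₁ + α₂ = 1`, namely `z₁` and `z₂z₃`.
By dominated convergence the averages tend to `c₁₀₀ + c₀₁₁ ρ = -1 + r |c₀₁₁|` as `N → ∞`, so this
number is `≤ 0`; letting `r → 1` gives the bound.
-/

open Complex

def polydisc3 : Set (ℂ × ℂ × ℂ) :=
  {z | ‖z.1‖ < 1 ∧ ‖z.2.1‖ < 1 ∧ ‖z.2.2‖ < 1}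

/-- The class `M(D³)` of infinitesimal generators on the unit polydisc in `ℂ³`. -/
def memM3 (h : ℂ × ℂ × ℂ → ℂ × ℂ × ℂ) : Prop :=
  DifferentiableOn ℂ h polydisc3 ∧ h 0 = 0 ∧
    fderiv ℂ h 0 = -ContinuousLinearMap.id ℂ (ℂ × ℂ × ℂ) ∧
    (∀ z ∈ polydisc3, z.1 ≠ 0 → ‖z.2.1‖ ≤ ‖z.1‖ →
      ‖z.2.2‖ ≤ ‖z.1‖ → ((h z).1 / z.1).re ≤ 0) ∧
    (∀ z ∈ polydisc3, z.2.1 ≠ 0 → ‖z.1‖ ≤ ‖z.2.1‖ →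
      ‖z.2.2‖ ≤ ‖z.2.1‖ → ((h z).2.1 / z.2.1).re ≤ 0) ∧
    (∀ z ∈ polydisc3, z.2.2 ≠ 0 → ‖z.1‖ ≤ ‖z.2.2‖ →
      ‖z.2.1‖ ≤ ‖z.2.2‖ → ((h z).2.2 / z.2.2).re ≤ 0)

open Finset Filter Topology

noncomputable def gridAverage (N : ℕ) (f : ℕ → ℕ → ℂ) : ℂ :=
  ((N : ℝ) ^ 2)⁻¹ • ∑ a ∈ range N, ∑ b ∈ range N, f a b

section gridAverage

variable {N : ℕ}

theorem hasSum_gridAverage {ι : Type*} {f : ι → ℕ → ℕ → ℂ} {g : ℕ → ℕ → ℂ}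
    (hf : ∀ a b, HasSum (fun i => f i a b) (g a b)) :
    HasSum (fun i => gridAverage N (f i)) (gridAverage N g) :=
  (hasSum_sum fun a _ => hasSum_sum fun b _ => hf a b).const_smul _

theorem norm_gridAverage_le {f : ℕ → ℕ → ℂ} {C : ℝ} (hN : 0 < N) (hf : ∀ a b, ‖f a b‖ ≤ C) :
    ‖gridAverage N f‖ ≤ C := by
  have hsum : ‖∑ a ∈ range N, ∑ b ∈ range N, f a b‖ ≤ N ^ 2 * C := by
    refine (norm_sum_le _ _).trans ?_
    refine (sum_le_sum fun a _ => norm_sum_le _ _).trans ?_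
    refine (sum_le_sum fun a _ => sum_le_sum fun b _ => hf a b).trans ?_
    simp [sq, mul_assoc]
  rw [gridAverage, norm_smul, norm_inv, Real.norm_of_nonneg (by positivity)]
  calc ((N : ℝ) ^ 2)⁻¹ * ‖∑ a ∈ range N, ∑ b ∈ range N, f a b‖
      ≤ ((N : ℝ) ^ 2)⁻¹ * (N ^ 2 * C) := by gcongr
    _ = C := by field_simp

theorem re_gridAverage_nonpos {f : ℕ → ℕ → ℂ} (hf : ∀ a b, (f a b).re ≤ 0) :
    (gridAverage N f).re ≤ 0 := by
  rw [gridAverage, Complex.smul_re, re_sum]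
  exact smul_nonpos_of_nonneg_of_nonpos (by positivity)
    (sum_nonpos fun a _ => by rw [re_sum]; exact sum_nonpos fun b _ => hf a b)

theorem gridAverage_mul_pow_mul_pow (d x y : ℂ) :
    gridAverage N (fun a b => d * x ^ a * y ^ b)
      = d * (N : ℂ)⁻¹ ^ 2 * ((∑ a ∈ range N, x ^ a) * ∑ b ∈ range N, y ^ b) := by
  have hsum : ∑ a ∈ range N, ∑ b ∈ range N, d * x ^ a * y ^ b
      = d * ((∑ a ∈ range N, x ^ a) * ∑ b ∈ range N, y ^ b) := by
    rw [sum_mul_sum, mul_sum]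
    simp only [mul_sum, mul_assoc]
  rw [gridAverage, hsum, Complex.real_smul]
  push_cast
  ring

end gridAverage

theorem IsPrimitiveRoot.sum_range_pow_div_self {ζ : ℂ} {N m : ℕ} (hζ : IsPrimitiveRoot ζ N)
    (hN : 1 < N) (hm : m < N) :
    ∑ a ∈ range N, (ζ ^ m / ζ) ^ a = if m = 1 then (N : ℂ) else 0 := by
  have hζ0 : ζ ≠ 0 := hζ.ne_zero (by omega)
  have hroot : (ζ ^ m / ζ) ^ N = 1 := by
    rw [div_pow, ← pow_mul, mul_comm, pow_mul, hζ.pow_eq_one, one_pow, one_div_one]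
  split_ifs with h1
  · simp [h1, hζ0]
  · have hne : ζ ^ m / ζ ≠ 1 := by
      rw [Ne, div_eq_one_iff_eq hζ0]
      exact fun h => h1 (hζ.pow_inj hm hN (by rwa [pow_one]))
    rw [geom_sum_eq hne, hroot, sub_self, zero_div]

def samplePoint (ρ ζ : ℂ) (a b : ℕ) : ℂ × ℂ × ℂ :=
  (ρ * ζ ^ (a + b), ρ * ζ ^ b, ρ * ζ ^ a)

section samplePoint

variable {ρ ζ : ℂ}

theorem norm_samplePoint (hζ : ‖ζ‖ = 1) (a b : ℕ) :
    ‖(samplePoint ρ ζ a b).1‖ = ‖ρ‖ ∧ ‖(samplePoint ρ ζ a b).2.1‖ = ‖ρ‖ ∧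
      ‖(samplePoint ρ ζ a b).2.2‖ = ‖ρ‖ := by
  simp [samplePoint, hζ]

theorem samplePoint_monomial_div_fst (hρ : ρ ≠ 0) (hζ : ζ ≠ 0) (d : ℂ) (α : ℕ × ℕ × ℕ)
    (a b : ℕ) :
    d * (samplePoint ρ ζ a b).1 ^ α.1 * (samplePoint ρ ζ a b).2.1 ^ α.2.1
        * (samplePoint ρ ζ a b).2.2 ^ α.2.2 / (samplePoint ρ ζ a b).1
      = d * ρ ^ (α.1 + α.2.1 + α.2.2) / ρ * (ζ ^ (α.1 + α.2.2) / ζ) ^ a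
        * (ζ ^ (α.1 + α.2.1) / ζ) ^ b := by
  simp only [samplePoint, div_pow, mul_pow, ← pow_mul, pow_add]
  field_simp
  ring

theorem gridAverage_samplePoint_monomial_div_fst (hρ : ρ ≠ 0) {N : ℕ}
    (hζ : IsPrimitiveRoot ζ N) (d : ℂ) (α : ℕ × ℕ × ℕ) (hN : α.1 + α.2.1 + α.2.2 + 2 ≤ N) :
    gridAverage N (fun a b => d * (samplePoint ρ ζ a b).1 ^ α.1
        * (samplePoint ρ ζ a b).2.1 ^ α.2.1 * (samplePoint ρ ζ a b).2.2 ^ α.2.2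
        / (samplePoint ρ ζ a b).1)
      = if α.1 + α.2.2 = 1 ∧ α.1 + α.2.1 = 1 then d * ρ ^ (α.1 + α.2.1 + α.2.2) / ρ else 0 := by
  have hN1 : 1 < N := by omega
  have hNC : (N : ℂ) ≠ 0 := by exact_mod_cast (by omega : N ≠ 0)
  simp only [samplePoint_monomial_div_fst hρ (hζ.ne_zero (by omega)), gridAverage_mul_pow_mul_pow,
    hζ.sum_range_pow_div_self hN1 (by omega : α.1 + α.2.2 < N),
    hζ.sum_range_pow_div_self hN1 (by omega : α.1 + α.2.1 < N)]
  split_ifs <;> first | tauto | (field_simp; done) | simp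

end samplePoint

theorem hasSum_ite_add_eq_one (c : ℕ × ℕ × ℕ → ℂ) {ρ : ℂ} (hρ : ρ ≠ 0) :
    HasSum (fun α : ℕ × ℕ × ℕ => if α.1 + α.2.2 = 1 ∧ α.1 + α.2.1 = 1 then
        c α * ρ ^ (α.1 + α.2.1 + α.2.2) / ρ else 0)
      (c (1, 0, 0) + c (0, 1, 1) * ρ) := by
  have hsupp : ∀ α ∉ ({(1, 0, 0), (0, 1, 1)} : Finset (ℕ × ℕ × ℕ)),
      (if α.1 + α.2.2 = 1 ∧ α.1 + α.2.1 = 1 then c α * ρ ^ (α.1 + α.2.1 + α.2.2) / ρ else 0)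
        = 0 := by
    rintro ⟨a₁, a₂, a₃⟩ hα
    simp only [mem_insert, mem_singleton, Prod.mk.injEq, not_or] at hα
    rw [if_neg]
    dsimp only
    omega
  have h : HasSum _ _ := hasSum_sum_of_ne_finset_zero hsupp
  rw [sum_pair (by decide)] at h
  convert h using 1
  simp
  field_simp

theorem tendsto_gridAverage_samplePoint {F : ℂ × ℂ × ℂ → ℂ} {c : ℕ × ℕ × ℕ → ℂ}
    (hc : ∀ z ∈ polydisc3,
      HasSum (fun α : ℕ × ℕ × ℕ => c α * z.1 ^ α.1 * z.2.1 ^ α.2.1 * z.2.2 ^ α.2.2) (F z))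
    {ρ : ℂ} (hρ0 : ρ ≠ 0) (hρ1 : ‖ρ‖ < 1) {ζ : ℕ → ℂ}
    (hζ : ∀ N, 0 < N → IsPrimitiveRoot (ζ N) N) :
    Tendsto (fun N => gridAverage N fun a b =>
        F (samplePoint ρ (ζ N) a b) / (samplePoint ρ (ζ N) a b).1)
      atTop (𝓝 (c (1, 0, 0) + c (0, 1, 1) * ρ)) := by
  set term : ℕ → ℕ × ℕ × ℕ → ℂ := fun N α => gridAverage N fun a b =>
    c α * (samplePoint ρ (ζ N) a b).1 ^ α.1 * (samplePoint ρ (ζ N) a b).2.1 ^ α.2.1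
      * (samplePoint ρ (ζ N) a b).2.2 ^ α.2.2 / (samplePoint ρ (ζ N) a b).1
  have hnorm N (hN : 0 < N) := norm_samplePoint (ρ := ρ) ((hζ N hN).norm'_eq_one hN.ne')
  have hsum N (hN : 0 < N) : HasSum (term N) (gridAverage N fun a b =>
      F (samplePoint ρ (ζ N) a b) / (samplePoint ρ (ζ N) a b).1) := by
    refine hasSum_gridAverage fun a b => (hc _ ?_).div_const _
    obtain ⟨h₁, h₂, h₃⟩ := hnorm N hN a b
    exact ⟨h₁ ▸ hρ1, h₂ ▸ hρ1, h₃ ▸ hρ1⟩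
  have hbound : Summable fun α : ℕ × ℕ × ℕ => ‖c α * ρ ^ α.1 * ρ ^ α.2.1 * ρ ^ α.2.2‖ / ‖ρ‖ :=
    ((hc (ρ, ρ, ρ) ⟨hρ1, hρ1, hρ1⟩).summable.norm).div_const _
  have hdom : ∀ᶠ N in atTop, ∀ α, ‖term N α‖ ≤ ‖c α * ρ ^ α.1 * ρ ^ α.2.1 * ρ ^ α.2.2‖ / ‖ρ‖ := by
    filter_upwards [eventually_gt_atTop 0] with N hN α
    refine norm_gridAverage_le hN fun a b => le_of_eq ?_
    obtain ⟨h₁, h₂, h₃⟩ := hnorm N hN a b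
    simp only [norm_div, norm_mul, norm_pow, h₁, h₂, h₃]
  have hlim α : Tendsto (term · α) atTop (𝓝 (if α.1 + α.2.2 = 1 ∧ α.1 + α.2.1 = 1 then
      c α * ρ ^ (α.1 + α.2.1 + α.2.2) / ρ else 0)) := by
    refine tendsto_const_nhds.congr' ?_
    filter_upwards [eventually_ge_atTop (α.1 + α.2.1 + α.2.2 + 2)] with N hN
    exact (gridAverage_samplePoint_monomial_div_fst hρ0 (hζ N (by omega)) _ α hN).symm
  rw [← (hasSum_ite_add_eq_one c hρ0).tsum_eq]
  refine (tendsto_tsum_of_dominated_convergence hbound hlim hdom).congr' ?_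
  filter_upwards [eventually_gt_atTop 0] with N hN
  exact (hsum N hN).tsum_eq

theorem memM3.re_fst_div_samplePoint_nonpos {h : ℂ × ℂ × ℂ → ℂ × ℂ × ℂ} (hM : memM3 h)
    {ρ ζ : ℂ} (hρ0 : ρ ≠ 0) (hρ1 : ‖ρ‖ < 1) (hζ : ‖ζ‖ = 1) (a b : ℕ) :
    ((h (samplePoint ρ ζ a b)).1 / (samplePoint ρ ζ a b).1).re ≤ 0 := by
  obtain ⟨h₁, h₂, h₃⟩ := norm_samplePoint (ρ := ρ) hζ a b
  refine hM.2.2.2.1 _ ⟨h₁ ▸ hρ1, h₂ ▸ hρ1, h₃ ▸ hρ1⟩ ?_ (h₂.trans h₁.symm).le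
    (h₃.trans h₁.symm).le
  rw [← norm_ne_zero_iff, h₁, norm_ne_zero_iff]
  exact hρ0

theorem Complex.exists_norm_eq_one_mul_eq_norm (w : ℂ) : ∃ u : ℂ, ‖u‖ = 1 ∧ w * u = ‖w‖ := by
  refine ⟨exp (↑(-arg w) * I), norm_exp_ofReal_mul_I _, ?_⟩
  conv_lhs => rw [← norm_mul_exp_arg_mul_I w]
  rw [mul_assoc, ← exp_add]
  simp

theorem le_one_of_forall_lt_one_mul_le {A : ℝ} (h : ∀ r : ℝ, 0 < r → r < 1 → r * A ≤ 1) :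
    A ≤ 1 := by
  have hlim : Tendsto (fun r : ℝ => r * A) (𝓝[<] 1) (𝓝 (1 * A)) :=
    (tendsto_nhdsWithin_of_tendsto_nhds tendsto_id).mul_const _
  rw [one_mul] at hlim
  exact le_of_tendsto hlim
    (eventually_of_mem (Ioo_mem_nhdsLT zero_lt_one) fun r hr => h r hr.1 hr.2)

theorem coeff_zero_one_one_le_one_general (h : ℂ × ℂ × ℂ → ℂ × ℂ × ℂ) (hM : memM3 h)
    (c : ℕ × ℕ × ℕ → ℂ)
    (hc : ∀ z ∈ polydisc3,
      HasSum (fun α : ℕ × ℕ × ℕ => c α * z.1 ^ α.1 * z.2.1 ^ α.2.1 * z.2.2 ^ α.2.2) ((h z).1))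
    (h100 : c (1, 0, 0) = -1) :
    ‖c (0, 1, 1)‖ ≤ 1 := by
  refine le_one_of_forall_lt_one_mul_le fun r hr0 hr1 => ?_
  obtain ⟨u, hu, hcu⟩ := exists_norm_eq_one_mul_eq_norm (c (0, 1, 1))
  have hρ : ‖(r * u : ℂ)‖ = r := by simp [hu, hr0.le]
  have hρ0 : (r * u : ℂ) ≠ 0 := by rw [← norm_ne_zero_iff, hρ]; exact hr0.ne'
  have hρ1 : ‖(r * u : ℂ)‖ < 1 := hρ.trans_lt hr1
  have hζ N (hN : 0 < N) := isPrimitiveRoot_exp N hN.ne'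
  have hre : (c (1, 0, 0) + c (0, 1, 1) * (r * u)).re ≤ 0 := by
    refine le_of_tendsto ((continuous_re.tendsto _).comp
      (tendsto_gridAverage_samplePoint hc hρ0 hρ1 hζ)) ?_
    filter_upwards [eventually_gt_atTop 0] with N hN
    exact re_gridAverage_nonpos fun a b =>
      hM.re_fst_div_samplePoint_nonpos hρ0 hρ1 ((hζ N hN).norm'_eq_one hN.ne') a b
  rw [h100, mul_left_comm, hcu] at hre
  simpa using hre

/-- For `h = (h₁,h₂,h₃) ∈ M(D³)` with `h₁(z) = -z₁ + Σ_{|α|≥2} c_α z^α`, the coefficient of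
`z₂z₃` satisfies `|c_{(0,1,1)}| ≤ 1`. -/
theorem coeff_zero_one_one_le_one (h : ℂ × ℂ × ℂ → ℂ × ℂ × ℂ) (hM : memM3 h)
    (c : ℕ × ℕ × ℕ → ℂ)
    (hc : ∀ z ∈ polydisc3,
      HasSum (fun α : ℕ × ℕ × ℕ => c α * z.1 ^ α.1 * z.2.1 ^ α.2.1 * z.2.2 ^ α.2.2) ((h z).1))
    (h000 : c (0, 0, 0) = 0) (h100 : c (1, 0, 0) = -1)
    (h010 : c (0, 1, 0) = 0) (h001 : c (0, 0, 1) = 0) :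
    ‖c (0, 1, 1)‖ ≤ 1 :=
  coeff_zero_one_one_le_one_general h hM c hc h100
end

section
/- Let (h₁,h₂) ∈ M(D²) with h₁(z) = -z₁ + Σ_{|α|≥2} c_α z^α. Then the map z₂ ↦ 1 - Σ_{n≥1} c_{(1,n)} z₂ⁿ is a holomorphic function on D with value 1 at 0 and nonnegative real part; consequently the map (z₁,z₂) ↦ ( -z₁(1 - Σ_{n≥1} c_{(1,n)} z₂ⁿ), h₂(z₁,z₂) ) also belongs to M(D²). -/
open Complex

/-!
For fixed `w`, the slice `ζ ↦ h₁(ζ, w)` is the power series `Σₘ (Σₙ c_{(m,n)} wⁿ) ζᵐ`, so its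
derivative at `0` is `Σₙ c_{(1,n)} wⁿ`. By the Cauchy formula this derivative is the average of
`h₁(ζ, w) / ζ` over a circle `|ζ| = R` with `|w| ≤ R < 1`, and on such a circle the defining
condition of `M(D²)` makes the real part of the integrand nonpositive. As `c_{(1,0)} = -1`, this is
`Re q(w) ≥ 0`, and the remaining conditions for the sheared map are routine.
-/

open Metric Real

theorem polydisc2_eq_ball : polydisc2 = ball (0 : ℂ × ℂ) 1 := by
  ext z
  simp [polydisc2, Prod.norm_def]

section PowerSeries

variable {a : ℕ → ℂ} {f : ℂ → ℂ}

theorem hasFPowerSeriesOnBall_ofScalars_of_hasSum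
    (hf : ∀ z ∈ ball (0 : ℂ) 1, HasSum (fun n => a n * z ^ n) (f z)) :
    HasFPowerSeriesOnBall f (FormalMultilinearSeries.ofScalars ℂ a) 0 1 where
  r_le := by
    refine ENNReal.le_of_forall_nnreal_lt fun r hr => ?_
    refine FormalMultilinearSeries.le_radius_of_summable_norm _ ?_
    have hr1 : (r : ℂ) ∈ ball (0 : ℂ) 1 := by simpa using ENNReal.coe_lt_one_iff.mp hr
    simpa using summable_norm_iff.mpr (hf _ hr1).summable
  r_pos := one_pos
  hasSum hy := by
    rw [← ENNReal.coe_one, Metric.eball_coe, NNReal.coe_one] at hy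
    simpa [FormalMultilinearSeries.ofScalars_apply_eq, mul_comm] using hf _ hy

theorem differentiableOn_ball_of_hasSum_mul_pow
    (hf : ∀ z ∈ ball (0 : ℂ) 1, HasSum (fun n => a n * z ^ n) (f z)) :
    DifferentiableOn ℂ f (ball 0 1) := by
  have := (hasFPowerSeriesOnBall_ofScalars_of_hasSum hf).differentiableOn
  rwa [← ENNReal.coe_one, Metric.eball_coe, NNReal.coe_one] at this

theorem deriv_zero_eq_of_hasSum_mul_pow
    (hf : ∀ z ∈ ball (0 : ℂ) 1, HasSum (fun n => a n * z ^ n) (f z)) :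
    deriv f 0 = a 1 := by
  simpa [FormalMultilinearSeries.ofScalars_apply_eq] using
    (hasFPowerSeriesOnBall_ofScalars_of_hasSum hf).hasFPowerSeriesAt.deriv

end PowerSeries

theorem circleAverage_div_eq_deriv {g : ℂ → ℂ} {R : ℝ} (hR : 0 < R)
    (hg : DiffContOnCl ℂ g (ball 0 R)) : circleAverage (fun z => g z / z) 0 R = deriv g 0 := by
  have hkernel : (fun z => (z - 0)⁻¹ • (g z / z)) = fun z => (1 / (z - 0) ^ 2) • g z := by
    funext z; simp only [smul_eq_mul, sub_zero]; ring
  rw [circleAverage_eq_circleIntegral hR.ne', hkernel, hg.deriv_eq_smul_circleIntegral hR,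
    smul_smul, inv_mul_cancel₀ two_pi_I_ne_zero, one_smul]

theorem re_deriv_nonpos_of_re_div_nonpos {g : ℂ → ℂ} {R : ℝ} (hR : 0 < R)
    (hg : DiffContOnCl ℂ g (ball 0 R)) (hre : ∀ z ∈ sphere (0 : ℂ) R, (g z / z).re ≤ 0) :
    (deriv g 0).re ≤ 0 := by
  have hcont : ContinuousOn (fun z => g z / z) (sphere 0 R) :=
    (hg.continuousOn_ball.mono sphere_subset_closedBall).div continuousOn_id
      fun z hz => ne_zero_of_mem_sphere hR.ne' ⟨z, hz⟩
  rw [← circleAverage_div_eq_deriv hR hg, ← reCLM_apply,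
    ← ContinuousLinearMap.circleAverage_comp_comm _ (hcont.circleIntegrable hR.le)]
  exact circleAverage_mono_on_of_le_circle
    ((reCLM.continuous.comp_continuousOn hcont).circleIntegrable hR.le)
    (by simpa [abs_of_pos hR] using hre)

section DoubleSeries

variable {c : ℕ × ℕ → ℂ} {x y : ℂ}

theorem Summable.prod_factor_mul_pow (hs : Summable fun α : ℕ × ℕ => c α * x ^ α.1 * y ^ α.2)
    (hx : x ≠ 0) (m : ℕ) : Summable fun n => c (m, n) * y ^ n := by
  refine ((hs.prod_factor m).mul_right (x ^ m)⁻¹).congr fun n => ?_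
  field_simp

theorem HasSum.prod_fiberwise_mul_pow {s : ℂ}
    (hs : HasSum (fun α : ℕ × ℕ => c α * x ^ α.1 * y ^ α.2) s) :
    HasSum (fun m => (∑' n, c (m, n) * y ^ n) * x ^ m) s := by
  refine hs.prod_fiberwise fun m => ?_
  have hrow : HasSum (fun n => c (m, n) * x ^ m * y ^ n) _ := (hs.summable.prod_factor m).hasSum
  simpa only [mul_right_comm _ (x ^ m), tsum_mul_right] using hrow

end DoubleSeries

theorem hasFDerivAt_shear {q : ℂ → ℂ} (hq : DifferentiableAt ℂ q 0) (hq0 : q 0 = 1)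
    {k : ℂ × ℂ → ℂ} {k' : ℂ × ℂ →L[ℂ] ℂ} (hk : HasFDerivAt k k' 0) :
    HasFDerivAt (fun z => (-z.1 * q z.2, k z)) ((-ContinuousLinearMap.fst ℂ ℂ ℂ).prod k') 0 := by
  have hfst : HasFDerivAt (fun z : ℂ × ℂ => -z.1) (-ContinuousLinearMap.fst ℂ ℂ ℂ) 0 :=
    (ContinuousLinearMap.fst ℂ ℂ ℂ).hasFDerivAt.neg
  have hsnd : HasFDerivAt (fun z : ℂ × ℂ => q z.2)
      ((fderiv ℂ q 0).comp (ContinuousLinearMap.snd ℂ ℂ ℂ)) 0 :=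
    hq.hasFDerivAt.comp (0 : ℂ × ℂ) (ContinuousLinearMap.snd ℂ ℂ ℂ).hasFDerivAt
  refine HasFDerivAt.prodMk ((hfst.mul hsnd).congr_fderiv ?_) hk
  ext <;> simp [hq0]

section Shearing

variable {h : ℂ × ℂ → ℂ × ℂ} {c : ℕ × ℕ → ℂ}

theorem re_tsum_mul_pow_nonpos (hM : memM2 h)
    (hc : ∀ z ∈ polydisc2, HasSum (fun α : ℕ × ℕ => c α * z.1 ^ α.1 * z.2 ^ α.2) ((h z).1))
    {w : ℂ} (hw : ‖w‖ < 1) : (∑' n, c (1, n) * w ^ n).re ≤ 0 := by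
  have hslice : ∀ ζ ∈ ball (0 : ℂ) 1,
      HasSum (fun m => (∑' n, c (m, n) * w ^ n) * ζ ^ m) (h (ζ, w)).1 := fun ζ hζ =>
    (hc (ζ, w) ⟨mem_ball_zero_iff.mp hζ, hw⟩).prod_fiberwise_mul_pow
  obtain ⟨R, hwR, hR1⟩ := exists_between hw
  have hR : 0 < R := (norm_nonneg w).trans_lt hwR
  rw [← deriv_zero_eq_of_hasSum_mul_pow hslice]
  refine re_deriv_nonpos_of_re_div_nonpos hR ?_ fun ζ hζ => ?_
  · refine ((differentiableOn_ball_of_hasSum_mul_pow hslice).mono ?_).diffContOnCl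
    rw [closure_ball 0 hR.ne']
    exact closedBall_subset_ball hR1
  · have hζR : ‖ζ‖ = R := mem_sphere_zero_iff_norm.mp hζ
    exact hM.2.2.2.1 (ζ, w) ⟨hζR ▸ hR1, hw⟩ (norm_pos_iff.mp (hζR ▸ hR)) (hζR ▸ hwR.le)

theorem memM2_shear (hM : memM2 h) {q : ℂ → ℂ} (hq : DifferentiableOn ℂ q (ball 0 1))
    (hq0 : q 0 = 1) (hre : ∀ w, ‖w‖ < 1 → 0 ≤ (q w).re) :
    memM2 fun z => (-z.1 * q z.2, (h z).2) := by
  have hh0 : DifferentiableAt ℂ h 0 :=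
    hM.1.differentiableAt (polydisc2_eq_ball ▸ ball_mem_nhds 0 one_pos)
  have hk : HasFDerivAt (fun z => (h z).2) (-ContinuousLinearMap.snd ℂ ℂ ℂ) 0 := by
    have := (ContinuousLinearMap.snd ℂ ℂ ℂ).hasFDerivAt.comp (0 : ℂ × ℂ) hh0.hasFDerivAt
    rw [hM.2.2.1] at this
    exact this.congr_fderiv (by ext <;> simp)
  refine ⟨?_, ?_, ?_, fun z hz hz1 _ => ?_, hM.2.2.2.2⟩
  · have hq₂ : DifferentiableOn ℂ (fun z : ℂ × ℂ => q z.2) polydisc2 :=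
      hq.comp differentiable_snd.differentiableOn fun z hz => mem_ball_zero_iff.mpr hz.2
    exact (differentiable_fst.neg.differentiableOn.mul hq₂).prodMk
      (differentiable_snd.comp_differentiableOn hM.1)
  · simp [hM.2.1]
  · rw [(hasFDerivAt_shear (hq.differentiableAt (ball_mem_nhds 0 one_pos)) hq0 hk).fderiv]
    ext <;> simp
  · dsimp only
    rw [neg_mul, neg_div, mul_div_cancel_left₀ _ hz1, neg_re]
    exact neg_nonpos.mpr (hre z.2 hz.2)

end Shearing

theorem shearing_linear_part_general (h : ℂ × ℂ → ℂ × ℂ) (hM : memM2 h) (c : ℕ × ℕ → ℂ)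
    (hc : ∀ z ∈ polydisc2, HasSum (fun α : ℕ × ℕ => c α * z.1 ^ α.1 * z.2 ^ α.2) ((h z).1))
    (h10 : c (1, 0) = -1) :
    (∀ w : ℂ, ‖w‖ < 1 →
      HasSum (fun n : ℕ => c (1, n + 1) * w ^ (n + 1))
        (1 - (1 - ∑' n : ℕ, c (1, n + 1) * w ^ (n + 1)))) ∧
    DifferentiableOn ℂ (fun w : ℂ => 1 - ∑' n : ℕ, c (1, n + 1) * w ^ (n + 1))
      (Metric.ball (0 : ℂ) 1) ∧
    (1 - ∑' n : ℕ, c (1, n + 1) * (0 : ℂ) ^ (n + 1)) = 1 ∧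
    (∀ w : ℂ, ‖w‖ < 1 → 0 ≤ ((1 : ℂ) - ∑' n : ℕ, c (1, n + 1) * w ^ (n + 1)).re) ∧
    memM2 (fun z : ℂ × ℂ =>
      (-z.1 * (1 - ∑' n : ℕ, c (1, n + 1) * z.2 ^ (n + 1)), (h z).2)) := by
  have hrow : ∀ w : ℂ, ‖w‖ < 1 → Summable fun n => c (1, n) * w ^ n := fun w hw =>
    (hc (2⁻¹, w) ⟨by norm_num, hw⟩).summable.prod_factor_mul_pow (by norm_num) 1
  have hq : ∀ w : ℂ, ‖w‖ < 1 →
      1 - ∑' n, c (1, n + 1) * w ^ (n + 1) = -∑' n, c (1, n) * w ^ n := fun w hw => by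
    rw [(hrow w hw).tsum_eq_zero_add, h10]
    ring
  have hdiff : DifferentiableOn ℂ (fun w : ℂ => 1 - ∑' n : ℕ, c (1, n + 1) * w ^ (n + 1))
      (ball 0 1) :=
    (differentiableOn_ball_of_hasSum_mul_pow fun w hw =>
      (hrow w (mem_ball_zero_iff.mp hw)).hasSum).neg.congr
        fun w hw => hq w (mem_ball_zero_iff.mp hw)
  have hre : ∀ w : ℂ, ‖w‖ < 1 → 0 ≤ ((1 : ℂ) - ∑' n : ℕ, c (1, n + 1) * w ^ (n + 1)).re :=
    fun w hw => by
      rw [hq w hw, neg_re]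
      exact neg_nonneg.mpr (re_tsum_mul_pow_nonpos hM hc hw)
  refine ⟨fun w hw => ?_, hdiff, by simp, hre, memM2_shear hM hdiff (by simp) hre⟩
  rw [sub_sub_cancel]
  exact ((summable_nat_add_iff 1).mpr (hrow w hw)).hasSum

/-- Shearing: for `h = (h₁,h₂) ∈ M(D²)` with `h₁(z) = -z₁ + Σ_{|α|≥2} c_α z^α`, the map
`q(w) = 1 - Σ_{n≥1} c_{(1,n)} wⁿ` is holomorphic on `D`, `q(0)=1`, `Re q ≥ 0`, and
`(z₁,z₂) ↦ (-z₁ q(z₂), h₂(z))` again belongs to `M(D²)`. -/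
theorem shearing_linear_part (h : ℂ × ℂ → ℂ × ℂ) (hM : memM2 h) (c : ℕ × ℕ → ℂ)
    (hc : ∀ z ∈ polydisc2, HasSum (fun α : ℕ × ℕ => c α * z.1 ^ α.1 * z.2 ^ α.2) ((h z).1))
    (h00 : c (0, 0) = 0) (h10 : c (1, 0) = -1) (h01 : c (0, 1) = 0) :
    (∀ w : ℂ, ‖w‖ < 1 →
      HasSum (fun n : ℕ => c (1, n + 1) * w ^ (n + 1))
        (1 - (1 - ∑' n : ℕ, c (1, n + 1) * w ^ (n + 1)))) ∧
    DifferentiableOn ℂ (fun w : ℂ => 1 - ∑' n : ℕ, c (1, n + 1) * w ^ (n + 1))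
      (Metric.ball (0 : ℂ) 1) ∧
    (1 - ∑' n : ℕ, c (1, n + 1) * (0 : ℂ) ^ (n + 1)) = 1 ∧
    (∀ w : ℂ, ‖w‖ < 1 → 0 ≤ ((1 : ℂ) - ∑' n : ℕ, c (1, n + 1) * w ^ (n + 1)).re) ∧
    memM2 (fun z : ℂ × ℂ =>
      (-z.1 * (1 - ∑' n : ℕ, c (1, n + 1) * z.2 ^ (n + 1)), (h z).2)) :=
  shearing_linear_part_general h hM c hc h10
end

section
/- Let (h₁,h₂) ∈ M(D²) with h₁(z) = -z₁ + Σ_{|α|≥2} c_α z^α. Then the map (z₁,z₂) ↦ (-z₁ + c_{(0,2)} z₂², h₂(z₁,z₂)) belongs to M(D²). -/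
open Complex

/-!
Along the curve `u ↦ (a u², b u)` with `‖a‖ = ‖b‖ < 1`, the quotient `h₁(z) / z₁` is a normally
convergent Laurent series in `u` whose constant term is `c₍₁,₀₎ + c₍₀,₂₎ b² / a`. Averaging over
`‖u‖ = 1` picks out this term, and since the curve stays on `‖z₂‖ = ‖z₁‖` its real part is
nonpositive. Choosing the phase of `a` turns this into `r ‖c₍₀,₂₎‖ ≤ 1` for all `r < 1`, and with
`‖c₍₀,₂₎‖ ≤ 1` the perturbation `c₍₀,₂₎ z₂²` is dominated by `z₁` wherever `‖z₂‖ ≤ ‖z₁‖`.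
-/

open Metric Real MeasureTheory

theorem circleAverage_zpow (k : ℤ) :
    circleAverage (fun u : ℂ => u ^ k) 0 1 = if k = 0 then 1 else 0 := by
  split_ifs with hk
  · simp [hk, circleAverage_const]
  rw [circleAverage_eq_circleIntegral one_ne_zero, smul_eq_zero]
  right
  calc (∮ z in C(0, 1), (z - 0)⁻¹ • z ^ k) = ∮ z in C(0, 1), (z - 0) ^ (k - 1) := by
        refine circleIntegral.integral_congr zero_le_one fun z hz => ?_
        have hz0 : z ≠ 0 := ne_zero_of_mem_unit_sphere ⟨z, hz⟩
        simp [zpow_sub_one₀ hz0, mul_comm]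
    _ = 0 := circleIntegral.integral_sub_zpow_of_ne (by omega) 0 0 1

theorem hasSum_circleAverage_of_hasSum_zpow {ι : Type*} [Countable ι] {f : ℂ → ℂ} {w : ι → ℂ}
    {k : ι → ℤ} (hw : Summable fun i => ‖w i‖)
    (hf : ∀ u ∈ sphere (0 : ℂ) 1, HasSum (fun i => w i * u ^ k i) (f u)) :
    HasSum (fun i => if k i = 0 then w i else 0) (circleAverage f 0 1) := by
  have hne : ∀ θ : ℝ, circleMap 0 1 θ ≠ 0 := fun θ => circleMap_ne_center one_ne_zero
  have hint := intervalIntegral.hasSum_integral_of_dominated_convergence (μ := volume)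
    (a := 0) (b := 2 * π) (F := fun i θ => w i * circleMap 0 1 θ ^ k i)
    (f := fun θ => f (circleMap 0 1 θ)) (fun i _ => ‖w i‖)
    (fun i => (continuous_const.mul ((continuous_circleMap 0 1).zpow₀ (k i)
      fun θ => Or.inl (hne θ))).aestronglyMeasurable)
    (fun i => .of_forall fun θ _ => by simp)
    (.of_forall fun _ _ => hw) intervalIntegrable_const
    (.of_forall fun θ _ => hf _ (circleMap_mem_sphere 0 zero_le_one θ))
  have hterm : ∀ i, (if k i = 0 then w i else 0) = circleAverage (fun u => w i * u ^ k i) 0 1 := by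
    intro i
    have := circleAverage_fun_smul (a := w i) (f := fun u : ℂ => u ^ k i) (c := 0) (R := 1)
    simp only [smul_eq_mul] at this
    rw [this, circleAverage_zpow]
    simp
  simpa only [hterm, circleAverage_def] using hint.const_smul (2 * π)⁻¹

theorem re_circleAverage_nonpos {f : ℂ → ℂ} {c : ℂ} {R : ℝ} (hf : CircleIntegrable f c R)
    (hre : ∀ u ∈ sphere c |R|, (f u).re ≤ 0) : (circleAverage f c R).re ≤ 0 := by
  rw [← reCLM_apply, ← reCLM.circleAverage_comp_comm hf]
  have := circleAverage_fun_smul (a := (-1 : ℝ)) (f := reCLM ∘ f) (c := c) (R := R)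
  have hnn := circleAverage_nonneg_of_nonneg (f := fun u => (-1 : ℝ) • (reCLM ∘ f) u) (c := c)
    (R := R) fun u hu => by simpa using hre u hu
  rw [this] at hnn
  simpa using hnn

theorem mem_polydisc2_parabola {a b u : ℂ} (hab : (a, b) ∈ polydisc2) (hu : u ∈ sphere (0 : ℂ) 1) :
    (a * u ^ 2, b * u) ∈ polydisc2 := by
  have hu : ‖u‖ = 1 := by simpa using hu
  simpa [polydisc2, hu] using hab

theorem isOpen_polydisc2 : IsOpen polydisc2 :=
  (isOpen_lt (continuous_norm.comp continuous_fst) continuous_const).inter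
    (isOpen_lt (continuous_norm.comp continuous_snd) continuous_const)

theorem circleAverage_parabola_div {f : ℂ × ℂ → ℂ} {c : ℕ × ℕ → ℂ}
    (hc : ∀ z ∈ polydisc2, HasSum (fun α : ℕ × ℕ => c α * z.1 ^ α.1 * z.2 ^ α.2) (f z))
    {a b : ℂ} (hab : (a, b) ∈ polydisc2) (ha : a ≠ 0) :
    circleAverage (fun u => f (a * u ^ 2, b * u) / (a * u ^ 2)) 0 1
      = c (1, 0) + c (0, 2) * b ^ 2 / a := by
  set w : ℕ × ℕ → ℂ := fun α => c α * a ^ α.1 * b ^ α.2 / a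
  set k : ℕ × ℕ → ℤ := fun α => 2 * α.1 + α.2 - 2
  have hw : Summable fun α => ‖w α‖ := by
    simpa [w, norm_div] using ((summable_norm_iff.mpr (hc _ hab).summable).div_const ‖a‖)
  have hseries : ∀ u ∈ sphere (0 : ℂ) 1,
      HasSum (fun α => w α * u ^ k α) (f (a * u ^ 2, b * u) / (a * u ^ 2)) := by
    intro u hu
    have hu0 : u ≠ 0 := ne_zero_of_mem_unit_sphere ⟨u, hu⟩
    refine ((hc _ (mem_polydisc2_parabola hab hu)).div_const (a * u ^ 2)).congr_fun fun α => ?_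
    have hk : k α = ((2 * α.1 + α.2 : ℕ) : ℤ) - 2 := by push_cast [k]; rfl
    rw [hk, zpow_sub₀ hu0, zpow_natCast, zpow_two, pow_add, pow_mul]
    simp only [w]
    field_simp
    ring
  have hzero : ∀ α ∉ ({(1, 0), (0, 2)} : Finset (ℕ × ℕ)), (if k α = 0 then w α else 0) = 0 := by
    rintro ⟨i, j⟩ hij
    simp only [Finset.mem_insert, Finset.mem_singleton, Prod.mk.injEq, not_or] at hij
    simp only [k, ite_eq_right_iff]
    omega
  have hconst : HasSum (fun α => if k α = 0 then w α else 0) (c (1, 0) + c (0, 2) * b ^ 2 / a) := by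
    rw [show c (1, 0) + c (0, 2) * b ^ 2 / a
        = ∑ α ∈ ({(1, 0), (0, 2)} : Finset (ℕ × ℕ)), if k α = 0 then w α else 0 by
      simp [w, k, ha]]
    exact hasSum_sum_of_ne_finset_zero hzero
  exact (hasSum_circleAverage_of_hasSum_zpow hw hseries).unique hconst

theorem norm_coeff_zero_two_le_one {f : ℂ × ℂ → ℂ} {c : ℕ × ℕ → ℂ} (hf : ContinuousOn f polydisc2)
    (hc : ∀ z ∈ polydisc2, HasSum (fun α : ℕ × ℕ => c α * z.1 ^ α.1 * z.2 ^ α.2) (f z))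
    (hre : ∀ z ∈ polydisc2, z.1 ≠ 0 → ‖z.2‖ ≤ ‖z.1‖ → (f z / z.1).re ≤ 0)
    (h10 : c (1, 0) = -1) : ‖c (0, 2)‖ ≤ 1 := by
  have hbound : ∀ r : ℝ, 0 < r → r < 1 → r * ‖c (0, 2)‖ ≤ 1 := by
    intro r hr0 hr1
    set a : ℂ := r * exp (arg (c (0, 2)) * I)
    have ha : ‖a‖ = r := by simp [a, norm_exp_ofReal_mul_I, abs_of_pos hr0]
    have ha0 : a ≠ 0 := norm_pos_iff.mp (ha ▸ hr0)
    have hab : (a, (r : ℂ)) ∈ polydisc2 := by simp [polydisc2, ha, abs_of_pos hr0, hr1]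
    have hden : ∀ u ∈ sphere (0 : ℂ) 1, a * u ^ 2 ≠ 0 := fun u hu =>
      mul_ne_zero ha0 (pow_ne_zero 2 (ne_zero_of_mem_unit_sphere ⟨u, hu⟩))
    have hcont : ContinuousOn (fun u => f (a * u ^ 2, r * u) / (a * u ^ 2)) (sphere 0 1) :=
      (hf.comp (by fun_prop) fun u hu => mem_polydisc2_parabola hab hu).div (by fun_prop) hden
    have hnonpos := re_circleAverage_nonpos (hcont.circleIntegrable zero_le_one) fun u hu => by
      have hu : u ∈ sphere (0 : ℂ) 1 := by simpa using hu
      have hu1 : ‖u‖ = 1 := by simpa using hu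
      exact hre _ (mem_polydisc2_parabola hab hu) (hden u hu) (by simp [ha, hu1, abs_of_pos hr0])
    have hphase : c (0, 2) * (r : ℂ) ^ 2 / a = (r * ‖c (0, 2)‖ : ℝ) := by
      nth_rewrite 1 [← norm_mul_exp_arg_mul_I (c (0, 2))]
      field_simp
      push_cast
      ring
    rw [circleAverage_parabola_div hc hab ha0, h10, hphase] at hnonpos
    simpa using hnonpos
  by_contra! H
  obtain ⟨r, hr₁, hr₂⟩ := exists_between (inv_lt_one_of_one_lt₀ H)
  have := hbound r ((inv_pos.mpr (zero_lt_one.trans H)).trans hr₁) hr₂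
  have := (inv_lt_iff_one_lt_mul₀ (zero_lt_one.trans H)).mp hr₁
  linarith

theorem re_neg_add_mul_sq_div_nonpos {c z w : ℂ} (hc : ‖c‖ ≤ 1) (hw : ‖w‖ ≤ 1) (hwz : ‖w‖ ≤ ‖z‖)
    (hz : z ≠ 0) : ((-z + c * w ^ 2) / z).re ≤ 0 := by
  have hz' : 0 < ‖z‖ := norm_pos_iff.mpr hz
  have hsmall : ‖c * w ^ 2 / z‖ ≤ 1 := by
    rw [norm_div, norm_mul, norm_pow, div_le_one hz']
    calc ‖c‖ * ‖w‖ ^ 2 ≤ 1 * (‖w‖ * 1) := by gcongr; nlinarith [norm_nonneg w]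
      _ ≤ ‖z‖ := by linarith
  rw [add_div, neg_div, div_self hz, add_re, neg_re, one_re]
  linarith [re_le_norm (c * w ^ 2 / z)]

theorem hasFDerivAt_shear_s6 {g : ℂ × ℂ → ℂ × ℂ}
    (hg : HasFDerivAt g (-ContinuousLinearMap.id ℂ (ℂ × ℂ)) 0) (c : ℂ) :
    HasFDerivAt (fun z : ℂ × ℂ => (-z.1 + c * z.2 ^ 2, (g z).2))
      (-ContinuousLinearMap.id ℂ (ℂ × ℂ)) 0 := by
  refine ((hasFDerivAt_fst.neg.add ((hasFDerivAt_snd.pow 2).const_mul c)).prodMk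
    hg.snd).congr_fderiv ?_
  ext <;> simp

theorem shearing_z2sq_general (h : ℂ × ℂ → ℂ × ℂ) (hM : memM2 h) (c : ℕ × ℕ → ℂ)
    (hc : ∀ z ∈ polydisc2, HasSum (fun α : ℕ × ℕ => c α * z.1 ^ α.1 * z.2 ^ α.2) ((h z).1))
    (h10 : c (1, 0) = -1) :
    memM2 (fun z : ℂ × ℂ => (-z.1 + c (0, 2) * z.2 ^ 2, (h z).2)) := by
  obtain ⟨hdiff, h0, hderiv, hre₁, hre₂⟩ := hM
  have hc02 : ‖c (0, 2)‖ ≤ 1 := norm_coeff_zero_two_le_one hdiff.continuousOn.fst hc hre₁ h10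
  have hzero : (0 : ℂ × ℂ) ∈ polydisc2 := by simp [polydisc2]
  refine ⟨?_, ?_, ?_, fun z hz hz1 hle => re_neg_add_mul_sq_div_nonpos hc02 hz.2.le hle hz1, hre₂⟩
  · have hfst : Differentiable ℂ fun z : ℂ × ℂ => -z.1 + c (0, 2) * z.2 ^ 2 := by fun_prop
    exact hfst.differentiableOn.prodMk hdiff.snd
  · simp [h0]
  · refine (hasFDerivAt_shear_s6 ?_ _).fderiv
    exact hderiv ▸ (hdiff.differentiableAt (isOpen_polydisc2.mem_nhds hzero)).hasFDerivAt

/-- For `h = (h₁,h₂) ∈ M(D²)` with `h₁(z) = -z₁ + Σ_{|α|≥2} c_α z^α`, the map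
`(z₁,z₂) ↦ (-z₁ + c_{(0,2)} z₂², h₂(z))` again belongs to `M(D²)`. -/
theorem shearing_z2sq (h : ℂ × ℂ → ℂ × ℂ) (hM : memM2 h) (c : ℕ × ℕ → ℂ)
    (hc : ∀ z ∈ polydisc2, HasSum (fun α : ℕ × ℕ => c α * z.1 ^ α.1 * z.2 ^ α.2) ((h z).1))
    (h00 : c (0, 0) = 0) (h10 : c (1, 0) = -1) (h01 : c (0, 1) = 0) :
    memM2 (fun z : ℂ × ℂ => (-z.1 + c (0, 2) * z.2 ^ 2, (h z).2)) :=
  shearing_z2sq_general h hM c hc h10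
end

section
/- The map H₄ : D² → C² given by H₄(z₁,z₂) = (-z₁ + z₂², -z₂) belongs to M(D²); in particular the coefficient bound |c_{(0,2)}| ≤ 1 for generators in M(D²) is attained. -/
open Complex

/-!
On the part of the polydisc where `‖z₂‖ ≤ ‖z₁‖` the first quotient is
`-1 + z₂² / z₁`, whose real part is at most `-1 + ‖z₁‖ ≤ 0`; the second quotient is `-1`.
Setting `z₁ = 0` in an expansion of `-z₁ + z₂²` leaves a one-variable power series for `z₂²`,
so uniqueness of power series coefficients forces `c (0, 2) = 1`.
-/

open FormalMultilinearSeries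

section PowerSeries

variable {𝕜 : Type*} [NontriviallyNormedField 𝕜]

theorem hasFPowerSeriesAt_ofScalars_of_hasSum {a : ℕ → 𝕜} {f : 𝕜 → 𝕜} {r : ℝ} (hr : 0 < r)
    (h : ∀ t : 𝕜, ‖t‖ < r → HasSum (fun n => a n * t ^ n) (f t)) :
    HasFPowerSeriesAt f (ofScalars 𝕜 a) 0 := by
  obtain ⟨t, ht₀, htr⟩ := NormedField.exists_norm_lt 𝕜 hr
  refine ⟨‖t‖₊, ?_, by simpa using ht₀, fun {y} hy => ?_⟩
  · refine (ofScalars 𝕜 a).le_radius_of_tendsto (l := 0) ?_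
    simpa [norm_mul, norm_pow, ofScalars_norm] using (h t htr).summable.tendsto_atTop_zero.norm
  · have hyt : ‖y‖ < ‖t‖ := by simpa using hy
    simpa [ofScalars_apply_eq, smul_eq_mul, mul_comm] using h y (hyt.trans htr)

theorem eq_of_hasSum_mul_pow {a b : ℕ → 𝕜} {f : 𝕜 → 𝕜} {r : ℝ} (hr : 0 < r)
    (ha : ∀ t : 𝕜, ‖t‖ < r → HasSum (fun n => a n * t ^ n) (f t))
    (hb : ∀ t : 𝕜, ‖t‖ < r → HasSum (fun n => b n * t ^ n) (f t)) : a = b :=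
  ofScalars_series_injective 𝕜 𝕜 <|
    (hasFPowerSeriesAt_ofScalars_of_hasSum hr ha).eq_formalMultilinearSeries
      (hasFPowerSeriesAt_ofScalars_of_hasSum hr hb)

theorem coeff_eq_one_of_hasSum_pow {a : ℕ → 𝕜} {r : ℝ} {k : ℕ} (hr : 0 < r)
    (ha : ∀ t : 𝕜, ‖t‖ < r → HasSum (fun n => a n * t ^ n) (t ^ k)) : a k = 1 := by
  have hpow : ∀ t : 𝕜, ‖t‖ < r →
      HasSum (fun n => (if n = k then 1 else 0 : 𝕜) * t ^ n) (t ^ k) := fun t _ => by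
    convert hasSum_ite_eq k (t ^ k) using 2 with n
    split_ifs <;> simp_all
  simpa using congrFun (eq_of_hasSum_mul_pow hr ha hpow) k

theorem hasSum_mul_zero_pow_mul_pow_iff {c : ℕ × ℕ → 𝕜} {t s : 𝕜} :
    HasSum (fun α : ℕ × ℕ => c α * 0 ^ α.1 * t ^ α.2) s ↔
      HasSum (fun n => c (0, n) * t ^ n) s := by
  have hoff : ∀ α ∉ Set.range (Prod.mk 0), c α * (0 : 𝕜) ^ α.1 * t ^ α.2 = 0 := by
    rintro ⟨i, j⟩ hij
    have hi : i ≠ 0 := by rintro rfl; exact hij ⟨j, rfl⟩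
    simp [zero_pow hi]
  simpa [Function.comp_def] using ((Prod.mk_right_injective 0).hasSum_iff hoff).symm

end PowerSeries

theorem Complex.re_neg_add_sq_div_nonpos {a b : ℂ} (ha : ‖a‖ ≤ 1) (hba : ‖b‖ ≤ ‖a‖) :
    ((-a + b ^ 2) / a).re ≤ 0 := by
  rcases eq_or_ne a 0 with rfl | ha₀
  · simp
  have hquot : ‖b ^ 2 / a‖ ≤ ‖a‖ := by
    rw [norm_div, norm_pow, div_le_iff₀ (norm_pos_iff.mpr ha₀), ← sq]
    exact pow_le_pow_left₀ (norm_nonneg b) hba 2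
  have hsplit : (-a + b ^ 2) / a = -1 + b ^ 2 / a := by field_simp
  rw [hsplit, add_re, neg_re, one_re]
  linarith [re_le_norm (b ^ 2 / a)]

theorem hasFDerivAt_H4 :
    HasFDerivAt (fun z : ℂ × ℂ => (-z.1 + z.2 ^ 2, -z.2))
      (-ContinuousLinearMap.id ℂ (ℂ × ℂ)) 0 := by
  have hfst := hasFDerivAt_fst (𝕜 := ℂ) (p := (0 : ℂ × ℂ)) (E := ℂ) (F := ℂ)
  have hsnd := hasFDerivAt_snd (𝕜 := ℂ) (p := (0 : ℂ × ℂ)) (E := ℂ) (F := ℂ)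
  refine ((hfst.neg.add (hsnd.pow 2)).prodMk hsnd.neg).congr_fderiv ?_
  ext <;> simp

/-- `H₄(z₁,z₂) = (-z₁ + z₂², -z₂)` belongs to `M(D²)`; in particular the coefficient bound
`|c_{(0,2)}| ≤ 1` for generators in `M(D²)` is attained. -/
theorem H4_mem :
    memM2 (fun z : ℂ × ℂ => (-z.1 + z.2 ^ 2, -z.2)) ∧
    ∀ c : ℕ × ℕ → ℂ,
      (∀ z ∈ polydisc2, HasSum (fun α : ℕ × ℕ => c α * z.1 ^ α.1 * z.2 ^ α.2)
        (-z.1 + z.2 ^ 2)) →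
      ‖c (0, 2)‖ = 1 := by
  refine ⟨⟨by fun_prop, by simp, hasFDerivAt_H4.fderiv, ?_, ?_⟩, fun c hc => ?_⟩
  · rintro z ⟨hz₁, -⟩ - hz
    exact re_neg_add_sq_div_nonpos hz₁.le hz
  · rintro z - hz₂ -
    simp [neg_div, div_self hz₂]
  · have haxis : ∀ t : ℂ, ‖t‖ < 1 → HasSum (fun n => c (0, n) * t ^ n) (t ^ 2) := fun t ht =>
      hasSum_mul_zero_pow_mul_pow_iff.mp (by simpa using hc (0, t) ⟨by simp, ht⟩)
    simp [coeff_eq_one_of_hasSum_pow one_pos haxis]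
end

section
/- The map H₆ : D³ → C³ given by H₆(z₁,z₂,z₃) = (-z₁ + z₂z₃, -z₂, -z₃) belongs to M(D³); in particular the coefficient bound |c_{(0,1,1)}| ≤ 1 for generators in M(D³) is attained. -/
open Complex

/-!
On the face `‖z‖_∞ = |z₁|` of the polydisc,
`Re((-z₁ + z₂z₃)/z₁) = -1 + Re(z₂z₃/z₁) ≤ -1 + |z₃| < 0` because `|z₂| ≤ |z₁|`; on the other
faces the quotient is `-1`. The coefficient `c_{(0,1,1)}` is read off the slice `z₁ = 0`, where the
expansion becomes a double power series summing to `z₂z₃`; summing it row by row and using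
uniqueness of one-variable power-series coefficients twice pins it down as `1`.
-/

open Filter Topology

section PowerSeriesCoeff

variable {𝕜 : Type*} [NontriviallyNormedField 𝕜]

theorem coeff_eq_of_hasSum_pow_mul {a b : ℕ → 𝕜} {f : 𝕜 → 𝕜}
    (ha : ∀ᶠ t in 𝓝 0, HasSum (fun n => a n * t ^ n) (f t))
    (hb : ∀ᶠ t in 𝓝 0, HasSum (fun n => b n * t ^ n) (f t)) : a = b := by
  have hasFPowerSeries : ∀ c : ℕ → 𝕜, (∀ᶠ t in 𝓝 0, HasSum (fun n => c n * t ^ n) (f t)) →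
      HasFPowerSeriesAt f (FormalMultilinearSeries.ofScalars 𝕜 c) 0 := fun c hc =>
    hasFPowerSeriesAt_iff.2 (by simpa [mul_comm] using hc)
  funext n
  simpa using congrArg (·.coeff n)
    ((hasFPowerSeries a ha).eq_formalMultilinearSeries (hasFPowerSeries b hb))

theorem hasSum_tsum_row_mul_pow {c : ℕ × ℕ → 𝕜} {a b s : 𝕜}
    (h : HasSum (fun p : ℕ × ℕ => c p * a ^ p.1 * b ^ p.2) s)
    (hrow : ∀ m, Summable fun n => c (m, n) * b ^ n) :
    HasSum (fun m => (∑' n, c (m, n) * b ^ n) * a ^ m) s :=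
  h.prod_fiberwise fun m => by
    simpa only [mul_comm, mul_left_comm] using (hrow m).hasSum.mul_left (a ^ m)

variable [CompleteSpace 𝕜]

theorem summable_row_of_summable_mul_pow_mul_pow {c : ℕ × ℕ → 𝕜} {a b : 𝕜} (ha : a ≠ 0)
    (h : Summable fun p : ℕ × ℕ => c p * a ^ p.1 * b ^ p.2) (m : ℕ) :
    Summable fun n => c (m, n) * b ^ n := by
  refine ((h.comp_injective (Prod.mk_right_injective m)).mul_left (a ^ m)⁻¹).congr fun n => ?_
  simp only [Function.comp_apply]
  field_simp

theorem coeff_eq_of_hasSum_mul_pow_mul_pow {c d : ℕ × ℕ → 𝕜} {f : 𝕜 → 𝕜 → 𝕜} {r : ℝ}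
    (hr : 0 < r)
    (hc : ∀ a b, ‖a‖ < r → ‖b‖ < r → HasSum (fun p : ℕ × ℕ => c p * a ^ p.1 * b ^ p.2) (f a b))
    (hd : ∀ a b, ‖a‖ < r → ‖b‖ < r → HasSum (fun p : ℕ × ℕ => d p * a ^ p.1 * b ^ p.2) (f a b)) :
    c = d := by
  obtain ⟨a₀, ha₀, ha₀r⟩ := NormedField.exists_norm_lt 𝕜 hr
  have hrow : ∀ e : ℕ × ℕ → 𝕜,
      (∀ a b, ‖a‖ < r → ‖b‖ < r → HasSum (fun p : ℕ × ℕ => e p * a ^ p.1 * b ^ p.2) (f a b)) →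
      ∀ b, ‖b‖ < r → ∀ m, Summable fun n => e (m, n) * b ^ n := fun e he b hb =>
    summable_row_of_summable_mul_pow_mul_pow (norm_pos_iff.1 ha₀) (he a₀ b ha₀r hb).summable
  have eventually_of_ball : ∀ P : 𝕜 → Prop, (∀ t, ‖t‖ < r → P t) → ∀ᶠ t in 𝓝 0, P t :=
    fun P hP => eventually_of_mem (Metric.ball_mem_nhds 0 hr) fun t ht =>
      hP t (mem_ball_zero_iff.1 ht)
  have hrowSum : ∀ b, ‖b‖ < r →
      (fun m => ∑' n, c (m, n) * b ^ n) = fun m => ∑' n, d (m, n) * b ^ n := fun b hb =>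
    coeff_eq_of_hasSum_pow_mul (f := fun a => f a b)
      (eventually_of_ball _ fun a ha => hasSum_tsum_row_mul_pow (hc a b ha hb) (hrow c hc b hb))
      (eventually_of_ball _ fun a ha => hasSum_tsum_row_mul_pow (hd a b ha hb) (hrow d hd b hb))
  ext ⟨m, n⟩
  refine congrFun (coeff_eq_of_hasSum_pow_mul
    (a := fun n => c (m, n)) (b := fun n => d (m, n)) (f := fun b => ∑' n, c (m, n) * b ^ n)
    (eventually_of_ball _ fun b hb => (hrow c hc b hb m).hasSum)
    (eventually_of_ball _ fun b hb => ?_)) n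
  rw [congrFun (hrowSum b hb) m]
  exact (hrow d hd b hb m).hasSum

end PowerSeriesCoeff

theorem hasSum_slice_fst_zero {R : Type*} [CommSemiring R] [TopologicalSpace R]
    {c : ℕ × ℕ × ℕ → R} {a b s : R}
    (h : HasSum (fun α : ℕ × ℕ × ℕ => c α * 0 ^ α.1 * a ^ α.2.1 * b ^ α.2.2) s) :
    HasSum (fun p : ℕ × ℕ => c (0, p) * a ^ p.1 * b ^ p.2) s := by
  have hvanish : ∀ α ∉ Set.range (Prod.mk 0),
      c α * 0 ^ α.1 * a ^ α.2.1 * b ^ α.2.2 = 0 := by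
    rintro ⟨k, p⟩ hα
    have hk : k ≠ 0 := by
      rintro rfl
      exact hα ⟨p, rfl⟩
    simp [zero_pow hk]
  simpa [Function.comp_def] using ((Prod.mk_right_injective 0).hasSum_iff hvanish).2 h

def H6 (z : ℂ × ℂ × ℂ) : ℂ × ℂ × ℂ := (-z.1 + z.2.1 * z.2.2, -z.2.1, -z.2.2)

theorem hasFDerivAt_H6_zero : HasFDerivAt H6 (-ContinuousLinearMap.id ℂ (ℂ × ℂ × ℂ)) 0 := by
  have h₁ := hasFDerivAt_fst (𝕜 := ℂ) (p := (0 : ℂ × ℂ × ℂ))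
  have h₂ := (hasFDerivAt_snd (𝕜 := ℂ) (p := (0 : ℂ × ℂ × ℂ))).fst
  have h₃ := (hasFDerivAt_snd (𝕜 := ℂ) (p := (0 : ℂ × ℂ × ℂ))).snd
  exact ((h₁.neg.add (h₂.mul h₃)).prodMk (h₂.neg.prodMk h₃.neg)).congr_fderiv (by ext <;> simp)

theorem Complex.re_neg_add_div_nonpos {x w : ℂ} (hw : ‖w‖ ≤ ‖x‖) : ((-x + w) / x).re ≤ 0 := by
  rcases eq_or_ne x 0 with rfl | hx
  · simp
  have hquot : ‖w / x‖ ≤ 1 := by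
    rw [norm_div]
    exact div_le_one_of_le₀ hw (norm_nonneg x)
  calc ((-x + w) / x).re = (w / x).re - 1 := by
        rw [neg_add_eq_sub, sub_div, div_self hx, sub_re, one_re]
    _ ≤ ‖w / x‖ - 1 := by gcongr; exact re_le_norm _
    _ ≤ 0 := by linarith

theorem memM3_H6 : memM3 H6 := by
  refine ⟨(by unfold H6; fun_prop : Differentiable ℂ H6).differentiableOn, by simp [H6],
    hasFDerivAt_H6_zero.fderiv, ?_, ?_, ?_⟩
  · rintro z ⟨-, -, hz₃⟩ - h₂ -
    refine Complex.re_neg_add_div_nonpos ?_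
    calc ‖z.2.1 * z.2.2‖ = ‖z.2.1‖ * ‖z.2.2‖ := norm_mul _ _
      _ ≤ ‖z.1‖ * 1 := mul_le_mul h₂ hz₃.le (norm_nonneg _) (norm_nonneg _)
      _ = ‖z.1‖ := mul_one _
  · rintro z - hz - -
    simp [H6, neg_div, div_self hz]
  · rintro z - hz - -
    simp [H6, neg_div, div_self hz]

/-- `H₆(z₁,z₂,z₃) = (-z₁ + z₂z₃, -z₂, -z₃)` belongs to `M(D³)`; in particular the bound
`|c_{(0,1,1)}| ≤ 1` for generators in `M(D³)` is attained. -/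
theorem H6_mem :
    memM3 (fun z : ℂ × ℂ × ℂ => (-z.1 + z.2.1 * z.2.2, -z.2.1, -z.2.2)) ∧
    ∀ c : ℕ × ℕ × ℕ → ℂ,
      (∀ z ∈ polydisc3,
        HasSum (fun α : ℕ × ℕ × ℕ => c α * z.1 ^ α.1 * z.2.1 ^ α.2.1 * z.2.2 ^ α.2.2)
          (-z.1 + z.2.1 * z.2.2)) →
      ‖c (0, 1, 1)‖ = 1 := by
  refine ⟨memM3_H6, fun c hc => ?_⟩
  have hmonomial : ∀ a b : ℂ, HasSum
      (fun p : ℕ × ℕ => (if p = (1, 1) then 1 else 0) * a ^ p.1 * b ^ p.2) (a * b) := fun a b => by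
    simpa using hasSum_single (f := fun p : ℕ × ℕ => (if p = (1, 1) then (1 : ℂ) else 0) *
      a ^ p.1 * b ^ p.2) (1, 1) fun p hp => by simp [hp]
  have hslice : (fun p : ℕ × ℕ => c (0, p)) = fun p => if p = (1, 1) then 1 else 0 :=
    coeff_eq_of_hasSum_mul_pow_mul_pow one_pos (f := fun a b => a * b)
      (fun a b ha hb => by simpa using hasSum_slice_fst_zero (hc (0, a, b) ⟨by simp, ha, hb⟩))
      (fun a b _ _ => hmonomial a b)
  simp [congrFun hslice (1, 1)]
end

section
/- Let f : D² → C² be the map F₂(z₁,z₂) = (z₁(1+z₂)², z₂). Then f is injective and holomorphic on D² with f(0)=0, Df(0)=I₂, Df(z) is invertible for all z ∈ D², and the map z ↦ -(Df(z))⁻¹·f(z) equals H₂(z) = (-z₁(1-z₂)/(1+z₂), -z₂), which belongs to M(D²). In particular F₂ is starlike on D². -/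
/-! `DF₂(z)` is triangular with diagonal `((1 + z₂)², 1)`, hence invertible on `D²`, and `H₂` solves
`DF₂(z) H₂(z) = -F₂(z)`. The `M(D²)` condition is trivial in the second coordinate
(`H₂(z)₂ / z₂ = -1`); in the first, `H₂(z)₁ / z₁ = -(1 - z₂) / (1 + z₂)`, and the Cayley map
`w ↦ (1 - w) / (1 + w)` sends the closed unit disc into the closed right half-plane. -/

open Complex

open ContinuousLinearMap

noncomputable section

def F₂ (z : ℂ × ℂ) : ℂ × ℂ := (z.1 * (1 + z.2) ^ 2, z.2)

def H₂ (z : ℂ × ℂ) : ℂ × ℂ := (-z.1 * (1 - z.2) / (1 + z.2), -z.2)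

def dF₂ (z : ℂ × ℂ) : (ℂ × ℂ) →L[ℂ] ℂ × ℂ :=
  ((1 + z.2) ^ 2 • fst ℂ ℂ ℂ + (2 * z.1 * (1 + z.2)) • snd ℂ ℂ ℂ).prod (snd ℂ ℂ ℂ)

def dF₂Inv (z : ℂ × ℂ) : (ℂ × ℂ) →L[ℂ] ℂ × ℂ :=
  ((1 + z.2)⁻¹ ^ 2 • fst ℂ ℂ ℂ + (-2 * z.1 / (1 + z.2)) • snd ℂ ℂ ℂ).prod (snd ℂ ℂ ℂ)

@[simp]
lemma dF₂_apply (z v : ℂ × ℂ) :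
    dF₂ z v = ((1 + z.2) ^ 2 * v.1 + 2 * z.1 * (1 + z.2) * v.2, v.2) := rfl

@[simp]
lemma dF₂Inv_apply (z v : ℂ × ℂ) :
    dF₂Inv z v = ((1 + z.2)⁻¹ ^ 2 * v.1 + -2 * z.1 / (1 + z.2) * v.2, v.2) := rfl

lemma one_add_ne_zero_of_norm_lt_one {w : ℂ} (hw : ‖w‖ < 1) : 1 + w ≠ 0 := by
  intro h
  rw [eq_neg_of_add_eq_zero_right h, norm_neg, norm_one] at hw
  exact lt_irrefl 1 hw

lemma hasFDerivAt_F₂ (z : ℂ × ℂ) : HasFDerivAt F₂ (dF₂ z) z := by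
  have h := ((hasFDerivAt_fst (𝕜 := ℂ) (p := z)).fun_mul
    (((hasFDerivAt_snd (𝕜 := ℂ) (p := z)).const_add 1).pow 2)).prodMk hasFDerivAt_snd
  refine h.congr_fderiv (ext fun v => ?_)
  simp [Prod.ext_iff]
  ring

lemma fderiv_F₂ : fderiv ℂ F₂ = dF₂ :=
  funext fun z => (hasFDerivAt_F₂ z).fderiv

lemma dF₂_mul_dF₂Inv {z : ℂ × ℂ} (hz : 1 + z.2 ≠ 0) : dF₂ z * dF₂Inv z = 1 := by
  refine ext fun v => ?_
  simp [Prod.ext_iff]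
  field_simp
  ring

lemma dF₂Inv_mul_dF₂ {z : ℂ × ℂ} (hz : 1 + z.2 ≠ 0) : dF₂Inv z * dF₂ z = 1 := by
  refine ext fun v => ?_
  simp [Prod.ext_iff]
  field_simp
  ring

lemma dF₂_zero : dF₂ 0 = ContinuousLinearMap.id ℂ (ℂ × ℂ) :=
  ext fun v => by simp

lemma isUnit_dF₂ {z : ℂ × ℂ} (hz : 1 + z.2 ≠ 0) : IsUnit (dF₂ z) :=
  ⟨⟨dF₂ z, dF₂Inv z, dF₂_mul_dF₂Inv hz, dF₂Inv_mul_dF₂ hz⟩, rfl⟩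

lemma dF₂_H₂ {z : ℂ × ℂ} (hz : 1 + z.2 ≠ 0) : dF₂ z (H₂ z) = -F₂ z := by
  ext
  · simp [H₂, F₂]
    field_simp
    ring
  · simp [H₂, F₂]

lemma injOn_F₂ : Set.InjOn F₂ {z | 1 + z.2 ≠ 0} := by
  intro z (hz : 1 + z.2 ≠ 0) w _ h
  obtain ⟨h1, h2⟩ := Prod.mk.inj h
  rw [h2] at h1 hz
  exact Prod.ext (mul_right_cancel₀ (pow_ne_zero 2 hz) h1) h2

lemma re_one_sub_div_one_add_nonneg {w : ℂ} (hw : ‖w‖ ≤ 1) : 0 ≤ ((1 - w) / (1 + w)).re := by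
  have hre : ((1 - w) / (1 + w)).re = (1 - ‖w‖ ^ 2) / normSq (1 + w) := by
    rw [div_re, ← normSq_eq_norm_sq, normSq_apply, normSq_apply]
    simp only [sub_re, add_re, sub_im, add_im, one_re, one_im]
    ring
  rw [hre]
  exact div_nonneg (by nlinarith [norm_nonneg w]) (normSq_nonneg _)

lemma H₂_eq_mul_div : H₂ = fun z => (-z.1 * ((1 - z.2) / (1 + z.2)), -z.2) := by
  funext z
  simp only [H₂, mul_div_assoc]

lemma differentiableAt_H₂ {z : ℂ × ℂ} (hz : 1 + z.2 ≠ 0) : DifferentiableAt ℂ H₂ z := by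
  unfold H₂
  fun_prop (disch := assumption)

/- The first coordinate is `-z₁ · g(z₂)` with `-z₁` vanishing at `0`, so only `g(0) = 1` enters
the derivative, not `g'`. -/
lemma hasFDerivAt_H₂_zero : HasFDerivAt H₂ (-ContinuousLinearMap.id ℂ (ℂ × ℂ)) 0 := by
  have hg : DifferentiableAt ℂ (fun z : ℂ × ℂ => (1 - z.2) / (1 + z.2)) 0 := by
    fun_prop (disch := simp)
  have h := ((hasFDerivAt_fst (𝕜 := ℂ) (p := (0 : ℂ × ℂ))).neg.fun_mul hg.hasFDerivAt).prodMk
    (hasFDerivAt_snd (𝕜 := ℂ) (p := (0 : ℂ × ℂ))).neg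
  rw [H₂_eq_mul_div]
  refine h.congr_fderiv (ext fun v => ?_)
  simp [Prod.ext_iff]

lemma memM2_H₂ : memM2 H₂ := by
  refine ⟨fun z hz =>
    (differentiableAt_H₂ (one_add_ne_zero_of_norm_lt_one hz.2)).differentiableWithinAt,
    by simp [H₂], hasFDerivAt_H₂_zero.fderiv, ?_, ?_⟩
  · intro z hz hz₁ _
    have hquot : (H₂ z).1 / z.1 = -((1 - z.2) / (1 + z.2)) := by
      simp only [H₂]
      field_simp
    rw [hquot, neg_re, neg_nonpos]
    exact re_one_sub_div_one_add_nonneg hz.2.le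
  · intro z _ hz₂ _
    simp [H₂, neg_div, div_self hz₂]

end

/-- `F₂(z₁,z₂) = (z₁(1+z₂)², z₂)` is normalized, univalent and locally biholomorphic on `D²`,
and `-(DF₂(z))⁻¹·F₂(z) = (-z₁(1-z₂)/(1+z₂), -z₂) ∈ M(D²)`; hence `F₂` is starlike. -/
theorem F2_starlike :
    Set.InjOn (fun z : ℂ × ℂ => (z.1 * (1 + z.2) ^ 2, z.2)) polydisc2 ∧
    DifferentiableOn ℂ (fun z : ℂ × ℂ => (z.1 * (1 + z.2) ^ 2, z.2)) polydisc2 ∧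
    (fun z : ℂ × ℂ => (z.1 * (1 + z.2) ^ 2, z.2)) 0 = 0 ∧
    fderiv ℂ (fun z : ℂ × ℂ => (z.1 * (1 + z.2) ^ 2, z.2)) 0
      = ContinuousLinearMap.id ℂ (ℂ × ℂ) ∧
    (∀ z ∈ polydisc2, IsUnit (fderiv ℂ (fun z : ℂ × ℂ => (z.1 * (1 + z.2) ^ 2, z.2)) z)) ∧
    (∀ z ∈ polydisc2,
      fderiv ℂ (fun z : ℂ × ℂ => (z.1 * (1 + z.2) ^ 2, z.2)) z
        ((-z.1 * (1 - z.2) / (1 + z.2), -z.2))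
        = -(z.1 * (1 + z.2) ^ 2, z.2)) ∧
    memM2 (fun z : ℂ × ℂ => (-z.1 * (1 - z.2) / (1 + z.2), -z.2)) := by
  show Set.InjOn F₂ polydisc2 ∧ DifferentiableOn ℂ F₂ polydisc2 ∧ F₂ 0 = 0 ∧
    fderiv ℂ F₂ 0 = ContinuousLinearMap.id ℂ (ℂ × ℂ) ∧
    (∀ z ∈ polydisc2, IsUnit (fderiv ℂ F₂ z)) ∧
    (∀ z ∈ polydisc2, fderiv ℂ F₂ z (H₂ z) = -F₂ z) ∧ memM2 H₂
  have hne : ∀ z ∈ polydisc2, 1 + z.2 ≠ 0 := fun z hz => one_add_ne_zero_of_norm_lt_one hz.2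
  rw [fderiv_F₂]
  exact ⟨injOn_F₂.mono hne, fun z _ => (hasFDerivAt_F₂ z).differentiableAt.differentiableWithinAt,
    by simp [F₂], dF₂_zero, fun z hz => isUnit_dF₂ (hne z hz), fun z hz => dF₂_H₂ (hne z hz),
    memM2_H₂⟩
end

section
/- Let F₆ : D³ → C³ be F₆(z₁,z₂,z₃) = (z₁ + z₂z₃, z₂, z₃). Then F₆ is injective on D³, F₆(0)=0, DF₆(0)=I₃, and -(DF₆(z))⁻¹·F₆(z) = (-z₁ + z₂z₃, -z₂, -z₃) belongs to M(D³); hence F₆ is starlike on D³. -/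
open Complex

/-!
Both `F₆` and the generator are `±id` plus the quadratic map `q z = (z₂z₃, 0, 0)`, whose
derivative `N` at any point has square zero. Hence `DF₆(z) = 1 + N` is invertible, and `F₆` is
inverted by `w ↦ w - q w` since `q` only sees the last two coordinates, which `F₆` fixes.
On the face `‖z‖_∞ = |z₁|` the first quotient is `-1 + z₂z₃/z₁`, of real part at most
`-1 + |z₁| < 0`; on the other two faces the quotients are `-1`.
-/

namespace Shear

variable {𝕜 : Type*} [NontriviallyNormedField 𝕜]

def shear (z : 𝕜 × 𝕜 × 𝕜) : 𝕜 × 𝕜 × 𝕜 := (z.1 + z.2.1 * z.2.2, z.2.1, z.2.2)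

def generator (z : 𝕜 × 𝕜 × 𝕜) : 𝕜 × 𝕜 × 𝕜 := (-z.1 + z.2.1 * z.2.2, -z.2.1, -z.2.2)

def quadPart (z : 𝕜 × 𝕜 × 𝕜) : 𝕜 × 𝕜 × 𝕜 := (z.2.1 * z.2.2, 0, 0)

def quadPartDeriv (z : 𝕜 × 𝕜 × 𝕜) : (𝕜 × 𝕜 × 𝕜) →L[𝕜] 𝕜 × 𝕜 × 𝕜 :=
  (z.2.1 • (ContinuousLinearMap.snd 𝕜 𝕜 𝕜 ∘L ContinuousLinearMap.snd 𝕜 𝕜 (𝕜 × 𝕜)) +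
    z.2.2 • (ContinuousLinearMap.fst 𝕜 𝕜 𝕜 ∘L ContinuousLinearMap.snd 𝕜 𝕜 (𝕜 × 𝕜))).prod 0

@[simp]
theorem quadPartDeriv_apply (z w : 𝕜 × 𝕜 × 𝕜) :
    quadPartDeriv z w = (z.2.1 * w.2.2 + z.2.2 * w.2.1, 0, 0) := by
  ext <;> simp [quadPartDeriv]

theorem shear_eq_add (z : 𝕜 × 𝕜 × 𝕜) : shear z = z + quadPart z := by
  ext <;> simp [shear, quadPart]

theorem generator_eq_neg_add (z : 𝕜 × 𝕜 × 𝕜) : generator z = -z + quadPart z := by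
  ext <;> simp [generator, quadPart]

theorem quadPart_shear (z : 𝕜 × 𝕜 × 𝕜) : quadPart (shear z) = quadPart z := rfl

theorem shear_injective : Function.Injective (shear : 𝕜 × 𝕜 × 𝕜 → 𝕜 × 𝕜 × 𝕜) := by
  refine Function.LeftInverse.injective (g := fun w => w - quadPart w) fun z => ?_
  change shear z - quadPart (shear z) = z
  rw [quadPart_shear, shear_eq_add, add_sub_cancel_right]

theorem hasFDerivAt_quadPart (z : 𝕜 × 𝕜 × 𝕜) :
    HasFDerivAt quadPart (quadPartDeriv z) z := by
  have h₂ : HasFDerivAt (fun z : 𝕜 × 𝕜 × 𝕜 => z.2.1)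
      (ContinuousLinearMap.fst 𝕜 𝕜 𝕜 ∘L ContinuousLinearMap.snd 𝕜 𝕜 (𝕜 × 𝕜)) z :=
    hasFDerivAt_snd.fst
  have h₃ : HasFDerivAt (fun z : 𝕜 × 𝕜 × 𝕜 => z.2.2)
      (ContinuousLinearMap.snd 𝕜 𝕜 𝕜 ∘L ContinuousLinearMap.snd 𝕜 𝕜 (𝕜 × 𝕜)) z :=
    hasFDerivAt_snd.snd
  exact (h₂.mul h₃).prodMk (hasFDerivAt_const _ z)

theorem quadPartDeriv_zero : quadPartDeriv (0 : 𝕜 × 𝕜 × 𝕜) = 0 := by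
  ext <;> simp

theorem quadPartDeriv_mul_self (z : 𝕜 × 𝕜 × 𝕜) : quadPartDeriv z * quadPartDeriv z = 0 := by
  ext <;> simp

theorem hasFDerivAt_shear (z : 𝕜 × 𝕜 × 𝕜) : HasFDerivAt shear (1 + quadPartDeriv z) z := by
  rw [show (shear : 𝕜 × 𝕜 × 𝕜 → 𝕜 × 𝕜 × 𝕜) = fun z => z + quadPart z from funext shear_eq_add]
  exact (hasFDerivAt_id z).add (hasFDerivAt_quadPart z)

theorem hasFDerivAt_generator (z : 𝕜 × 𝕜 × 𝕜) :
    HasFDerivAt generator (-1 + quadPartDeriv z) z := by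
  rw [show (generator : 𝕜 × 𝕜 × 𝕜 → 𝕜 × 𝕜 × 𝕜) = fun z => -z + quadPart z
    from funext generator_eq_neg_add]
  exact (hasFDerivAt_id z).neg.add (hasFDerivAt_quadPart z)

theorem fderiv_shear_zero : fderiv 𝕜 shear (0 : 𝕜 × 𝕜 × 𝕜) = 1 := by
  rw [(hasFDerivAt_shear 0).fderiv, quadPartDeriv_zero, add_zero]

theorem fderiv_generator_zero : fderiv 𝕜 generator (0 : 𝕜 × 𝕜 × 𝕜) = -1 := by
  rw [(hasFDerivAt_generator 0).fderiv, quadPartDeriv_zero, add_zero]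

theorem isUnit_fderiv_shear (z : 𝕜 × 𝕜 × 𝕜) : IsUnit (fderiv 𝕜 shear z) := by
  rw [(hasFDerivAt_shear z).fderiv]
  exact IsNilpotent.isUnit_one_add ⟨2, by rw [pow_two, quadPartDeriv_mul_self]⟩

theorem fderiv_shear_generator (z : 𝕜 × 𝕜 × 𝕜) :
    fderiv 𝕜 shear z (generator z) = -shear z := by
  rw [(hasFDerivAt_shear z).fderiv]
  ext <;> simp [generator, shear]
  ring

end Shear

open Shear

theorem Complex.re_neg_add_mul_div_nonpos {a b c : ℂ} (ha : a ≠ 0) (ha₁ : ‖a‖ ≤ 1)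
    (hb : ‖b‖ ≤ ‖a‖) (hc : ‖c‖ ≤ ‖a‖) : ((-a + b * c) / a).re ≤ 0 := by
  have hbc : (b * c / a).re ≤ 1 :=
    calc (b * c / a).re ≤ ‖b * c / a‖ := re_le_norm _
      _ = ‖b‖ * ‖c‖ / ‖a‖ := by rw [norm_div, norm_mul]
      _ ≤ ‖a‖ * ‖a‖ / ‖a‖ := by gcongr
      _ ≤ 1 := by rwa [mul_self_div_self]
  rw [add_div, neg_div_self ha, add_re, neg_re, one_re]
  linarith

theorem memM3_generator : memM3 generator := by
  refine ⟨fun z _ => (hasFDerivAt_generator z).differentiableAt.differentiableWithinAt,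
    by simp [generator], fderiv_generator_zero, ?_, ?_, ?_⟩
  · exact fun z hz h₁ h₂ h₃ => re_neg_add_mul_div_nonpos h₁ hz.1.le h₂ h₃
  · intro z _ h₂ _ _
    simp [generator, neg_div_self h₂]
  · intro z _ h₃ _ _
    simp [generator, neg_div_self h₃]

/-- `F₆(z₁,z₂,z₃) = (z₁ + z₂z₃, z₂, z₃)` is normalized, univalent on `D³`, and
`-(DF₆(z))⁻¹·F₆(z) = (-z₁ + z₂z₃, -z₂, -z₃) ∈ M(D³)`; hence `F₆` is starlike on `D³`. -/
theorem F6_starlike :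
    Set.InjOn (fun z : ℂ × ℂ × ℂ => (z.1 + z.2.1 * z.2.2, z.2.1, z.2.2)) polydisc3 ∧
    (fun z : ℂ × ℂ × ℂ => (z.1 + z.2.1 * z.2.2, z.2.1, z.2.2)) 0 = 0 ∧
    fderiv ℂ (fun z : ℂ × ℂ × ℂ => (z.1 + z.2.1 * z.2.2, z.2.1, z.2.2)) 0
      = ContinuousLinearMap.id ℂ (ℂ × ℂ × ℂ) ∧
    (∀ z ∈ polydisc3,
      IsUnit (fderiv ℂ (fun z : ℂ × ℂ × ℂ => (z.1 + z.2.1 * z.2.2, z.2.1, z.2.2)) z)) ∧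
    (∀ z ∈ polydisc3,
      fderiv ℂ (fun z : ℂ × ℂ × ℂ => (z.1 + z.2.1 * z.2.2, z.2.1, z.2.2)) z
        ((-z.1 + z.2.1 * z.2.2, -z.2.1, -z.2.2))
        = -(z.1 + z.2.1 * z.2.2, z.2.1, z.2.2)) ∧
    memM3 (fun z : ℂ × ℂ × ℂ => (-z.1 + z.2.1 * z.2.2, -z.2.1, -z.2.2)) :=
  ⟨shear_injective.injOn, by simp, fderiv_shear_zero, fun z _ => isUnit_fderiv_shear z,
    fun z _ => fderiv_shear_generator z, memM3_generator⟩
end
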